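/- arXiv:1612.05057 — 4 statements merged into one kernel-verified Lean document; each statement's English description precedes it below -/
import Mathlib

section
/- Let (xᵏ, zᵏ, yᵏ)_{k≥0} be a sequence generated by the AD-PMM algorithm. Then for all k ≥ 0 and all (x, z, y) ∈ ℝⁿ × ℝᵐ × ℝᵐ: l(x^{k+1}, z^{k+1}, y) ≤ l(x, z, y^{k+1}) + c⟨z^{k+1} − zᵏ, A(x − x^{k+1})⟩ + (1/2)(‖x − xᵏ‖²_{M₁} − ‖x − x^{k+1}‖²_{M₁} + ‖z − zᵏ‖²_{M₂} − ‖z − z^{k+1}‖²_{M₂}) + (1/2)(c⁻¹‖y − yᵏ‖² − c⁻¹‖y − y^{k+1}‖²) − (1/2)(‖x^{k+1} − xᵏ‖²_{M₁} + ‖z^{k+1} − zᵏ‖²_{M₂} + c⁻¹‖y^{k+1} − yᵏ‖²). -/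
open scoped InnerProductSpace
open Filter

noncomputable section

section OpDefs

variable {E F : Type*} [NormedAddCommGroup E] [InnerProductSpace ℝ E]
  [NormedAddCommGroup F] [InnerProductSpace ℝ F]

/-- `U ∈ S₊(E)`: continuous linear, self-adjoint and positive semidefinite. -/
def IsSplusOp (U : E →L[ℝ] E) : Prop :=
  (∀ x y : E, ⟪U x, y⟫_ℝ = ⟪x, U y⟫_ℝ) ∧ ∀ x : E, 0 ≤ ⟪x, U x⟫_ℝ

/-- The squared seminorm `‖x‖²_U := ⟪x, U x⟫`. -/
def opSq (U : E →L[ℝ] E) (x : E) : ℝ := ⟪x, U x⟫_ℝ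

/-- Loewner order `U ⪰ V`. -/
def opLE (U V : E →L[ℝ] E) : Prop := ∀ x : E, ⟪x, V x⟫_ℝ ≤ ⟪x, U x⟫_ℝ

/-- `U ∈ P_α(E)`, i.e. `U ∈ S₊(E)` and `U ⪰ α·Id`. -/
def IsPalphaOp (α : ℝ) (U : E →L[ℝ] E) : Prop :=
  IsSplusOp U ∧ ∀ x : E, α * ‖x‖ ^ 2 ≤ ⟪x, U x⟫_ℝ

/-- Properness of an extended-real-valued function. -/
def ERealProper (f : E → EReal) : Prop := (∀ x, f x ≠ ⊥) ∧ ∃ x, f x ≠ ⊤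

/-- Convexity of an extended-real-valued function. -/
def ERealConvex (f : E → EReal) : Prop :=
  ∀ x y : E, ∀ a b : ℝ, 0 ≤ a → 0 ≤ b → a + b = 1 →
    f (a • x + b • y) ≤ (a : EReal) * f x + (b : EReal) * f y

/-- Weak convergence of a sequence in a Hilbert space, tested against inner products. -/
def WeakConv (u : ℕ → E) (p : E) : Prop :=
  ∀ w : E, Tendsto (fun k => ⟪u k, w⟫_ℝ) atTop (nhds ⟪p, w⟫_ℝ)

/-- The Lagrangian `l(x,z,y) = f(x) + g(z) + ⟪y, Ax - z⟫`. -/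
def Lagr (f : E → EReal) (g : F → EReal) (A : E →L[ℝ] F) (p : E) (q v : F) : EReal :=
  f p + g q + ((⟪v, A p - q⟫_ℝ : ℝ) : EReal)

/-- The Lagrangian with an additional smooth summand `h`:
`l(x,z,y) = f(x) + h(x) + g(z) + ⟪y, Ax - z⟫`. -/
def LagrH (f : E → EReal) (h : E → ℝ) (g : F → EReal) (A : E →L[ℝ] F)
    (p : E) (q v : F) : EReal :=
  f p + ((h p : ℝ) : EReal) + g q + ((⟪v, A p - q⟫_ℝ : ℝ) : EReal)

/-- `(xs, zs, ys)` is a saddle point of `l`. -/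
def IsSaddle (l : E → F → F → EReal) (xs : E) (zs ys : F) : Prop :=
  ∀ (p : E) (q v : F), l xs zs v ≤ l xs zs ys ∧ l xs zs ys ≤ l p q ys

/-- `xk1` is a minimizer of `u ↦ f u + (c/2)‖Au - zk + c⁻¹ yk‖² + (1/2)‖u - xk‖²_M`. -/
def IsXUpdate (f : E → EReal) (A : E →L[ℝ] F) (c : ℝ) (M : E →L[ℝ] E)
    (xk : E) (zk yk : F) (xk1 : E) : Prop :=
  ∀ u : E,
    f xk1 + (((c/2) * ‖A xk1 - zk + c⁻¹ • yk‖ ^ 2 + (1/2) * opSq M (xk1 - xk) : ℝ) : EReal) ≤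
    f u + (((c/2) * ‖A u - zk + c⁻¹ • yk‖ ^ 2 + (1/2) * opSq M (u - xk) : ℝ) : EReal)

/-- `xk1` is a minimizer of the `x`-subproblem with linearized smooth part:
`u ↦ f u + ⟪u - xk, ∇h(xk)⟫ + (c/2)‖Au - zk + c⁻¹ yk‖² + (1/2)‖u - xk‖²_M`. -/
def IsXUpdateGrad (f : E → EReal) (h' : E → E) (A : E →L[ℝ] F) (c : ℝ) (M : E →L[ℝ] E)
    (xk : E) (zk yk : F) (xk1 : E) : Prop :=
  ∀ u : E,
    f xk1 + ((⟪xk1 - xk, h' xk⟫_ℝ + (c/2) * ‖A xk1 - zk + c⁻¹ • yk‖ ^ 2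
        + (1/2) * opSq M (xk1 - xk) : ℝ) : EReal) ≤
    f u + ((⟪u - xk, h' xk⟫_ℝ + (c/2) * ‖A u - zk + c⁻¹ • yk‖ ^ 2
        + (1/2) * opSq M (u - xk) : ℝ) : EReal)

/-- `zk1` is a minimizer of `w ↦ g w + (c/2)‖Ax - w + c⁻¹ yk‖² + (1/2)‖w - zk‖²_M`. -/
def IsZUpdate (g : F → EReal) (c : ℝ) (M : F →L[ℝ] F)
    (Ax zk yk zk1 : F) : Prop :=
  ∀ w : F,
    g zk1 + (((c/2) * ‖Ax - zk1 + c⁻¹ • yk‖ ^ 2 + (1/2) * opSq M (zk1 - zk) : ℝ) : EReal) ≤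
    g w + (((c/2) * ‖Ax - w + c⁻¹ • yk‖ ^ 2 + (1/2) * opSq M (w - zk) : ℝ) : EReal)

end OpDefs

/-!
Each subproblem minimizes a convex function plus a quadratic. Comparing the minimal value with the
value at `x + t (p - x)`, bounding `f` there by convexity and letting `t → 0⁺` yields a
variational inequality: `f p - f x` dominates minus the derivative of the quadratic at `x` in
the direction `p - x`. Adding the inequalities of the `x`- and `z`-steps, the multiplier update
`y^{k+1} = y^k + c (A x^{k+1} - z^{k+1})` turns the gradients of the augmented penalty into inner
products with `y^{k+1}`, and the three-point identity
`2⟪M (s - t), u - s⟫ = ‖u - t‖²_M - ‖u - s‖²_M - ‖s - t‖²_M` rewrites every remaining inner product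
as the stated differences of squared seminorms.
-/

open Topology

lemma le_of_forall_le_add_mul {a b C : ℝ} (h : ∀ t : ℝ, 0 < t → t ≤ 1 → a ≤ b + t * C) :
    a ≤ b := by
  have hlim : Tendsto (fun t : ℝ => b + t * C) (𝓝[>] 0) (𝓝 b) := by
    have hcont : Continuous fun t : ℝ => b + t * C := by fun_prop
    simpa using (hcont.tendsto 0).mono_left nhdsWithin_le_nhds
  refine ge_of_tendsto hlim ?_
  filter_upwards [Ioc_mem_nhdsGT one_pos] with t ht using h t ht.1 ht.2

section Convex

variable {E : Type*} [NormedAddCommGroup E] [InnerProductSpace ℝ E]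

theorem ERealConvex.le_add_of_forall_add_quadratic_le {φ : E → EReal} (hφ : ERealConvex φ)
    (hbot : ∀ u, φ u ≠ ⊥) {Q L C : E → ℝ} {xs : E}
    (hQ : ∀ (t : ℝ) (d : E), Q (xs + t • d) = Q xs + t * L d + t ^ 2 * C d)
    (hmin : ∀ u, φ xs + Q xs ≤ φ u + Q u) (p : E) :
    φ xs ≤ φ p + L (p - xs) := by
  by_cases hp : φ p = ⊤
  · simp [hp]
  obtain ⟨b, hb⟩ : ∃ b : ℝ, φ p = b := ⟨_, (EReal.coe_toReal hp (hbot p)).symm⟩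
  have hxs : φ xs ≠ ⊤ := by
    intro h
    have := hmin p
    rw [h, hb, EReal.top_add_of_ne_bot (EReal.coe_ne_bot _), top_le_iff] at this
    exact EReal.coe_ne_top _ (by exact_mod_cast this)
  obtain ⟨a, ha⟩ : ∃ a : ℝ, φ xs = a := ⟨_, (EReal.coe_toReal hxs (hbot xs)).symm⟩
  set d := p - xs
  rw [ha, hb, ← EReal.coe_add, EReal.coe_le_coe_iff]
  refine le_of_forall_le_add_mul (C := C d) fun t ht0 ht1 => ?_
  have hseg : φ (xs + t • d) ≤ ((1 - t) * a + t * b : ℝ) := by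
    have h := hφ xs p (1 - t) t (by linarith) ht0.le (by ring)
    have hpt : (1 - t) • xs + t • p = xs + t • d := by
      simp only [d, smul_sub, sub_smul, one_smul]; abel
    rw [hpt, ha, hb] at h
    exact_mod_cast h
  have h := (hmin (xs + t • d)).trans (add_le_add hseg le_rfl)
  rw [ha, hQ] at h
  have h' : a + Q xs ≤ (1 - t) * a + t * b + (Q xs + t * L d + t ^ 2 * C d) := by
    exact_mod_cast h
  have hscaled : t * a ≤ t * (b + L d + t * C d) := by linarith
  exact le_of_mul_le_mul_left hscaled ht0

end Convex

section Quadratic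

variable {E F : Type*} [NormedAddCommGroup E] [InnerProductSpace ℝ E]
  [NormedAddCommGroup F] [InnerProductSpace ℝ F]

theorem IsSplusOp.isSymmetric {M : E →L[ℝ] E} (hM : IsSplusOp M) :
    (M : E →ₗ[ℝ] E).IsSymmetric :=
  hM.1

namespace LinearMap.IsSymmetric

variable {M : E →L[ℝ] E}

theorem opSq_add (hM : (M : E →ₗ[ℝ] E).IsSymmetric) (u w : E) :
    opSq M (u + w) = opSq M u + 2 * ⟪M u, w⟫_ℝ + opSq M w := by
  have h : ⟪M u, w⟫_ℝ = ⟪u, M w⟫_ℝ := hM u w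
  simp only [opSq, map_add, inner_add_left, inner_add_right, real_inner_comm (M u) w]
  linarith

theorem opSq_add_smul (hM : (M : E →ₗ[ℝ] E).IsSymmetric) (u d : E) (t : ℝ) :
    opSq M (u + t • d) = opSq M u + t * (2 * ⟪M u, d⟫_ℝ) + t ^ 2 * opSq M d := by
  rw [hM.opSq_add, real_inner_smul_right]
  simp only [opSq, map_smul, real_inner_smul_left, real_inner_smul_right]
  ring

theorem inner_sub_sub_eq_opSq (hM : (M : E →ₗ[ℝ] E).IsSymmetric) (s t u : E) :
    ⟪M (s - t), u - s⟫_ℝ =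
      (1/2) * (opSq M (u - t) - opSq M (u - s)) - (1/2) * opSq M (s - t) := by
  rw [show u - t = (s - t) + (u - s) by abel, hM.opSq_add]
  ring

end LinearMap.IsSymmetric

theorem norm_add_smul_sq_real (u d : F) (t : ℝ) :
    ‖u + t • d‖ ^ 2 = ‖u‖ ^ 2 + t * (2 * ⟪u, d⟫_ℝ) + t ^ 2 * ‖d‖ ^ 2 := by
  rw [norm_add_sq_real, real_inner_smul_right, norm_smul, mul_pow, Real.norm_eq_abs, sq_abs]
  ring

theorem real_inner_sub_sub_eq_norm_sq (s t u : F) :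
    ⟪s - t, u - s⟫_ℝ = (1/2) * (‖u - t‖ ^ 2 - ‖u - s‖ ^ 2) - (1/2) * ‖s - t‖ ^ 2 := by
  rw [show u - t = (s - t) + (u - s) by abel, norm_add_sq_real]
  ring

end Quadratic

section ProximalStep

variable {E F : Type*} [NormedAddCommGroup E] [InnerProductSpace ℝ E]
  [NormedAddCommGroup F] [InnerProductSpace ℝ F] {M : E →L[ℝ] E}

theorem ERealConvex.le_add_inner_of_forall_prox_le {φ : E → EReal} (hφ : ERealConvex φ)
    (hbot : ∀ u, φ u ≠ ⊥) (hM : (M : E →ₗ[ℝ] E).IsSymmetric) (c : ℝ) (B : E →L[ℝ] F) (r : F)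
    (w xs : E)
    (hmin : ∀ u, φ xs + ((c/2) * ‖B xs + r‖ ^ 2 + (1/2) * opSq M (xs - w) : ℝ) ≤
      φ u + ((c/2) * ‖B u + r‖ ^ 2 + (1/2) * opSq M (u - w) : ℝ)) (p : E) :
    φ xs ≤ φ p + (c * ⟪B xs + r, B (p - xs)⟫_ℝ + ⟪M (xs - w), p - xs⟫_ℝ : ℝ) := by
  refine hφ.le_add_of_forall_add_quadratic_le hbot
    (Q := fun u => (c/2) * ‖B u + r‖ ^ 2 + (1/2) * opSq M (u - w))
    (L := fun d => c * ⟪B xs + r, B d⟫_ℝ + ⟪M (xs - w), d⟫_ℝ)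
    (C := fun d => (c/2) * ‖B d‖ ^ 2 + (1/2) * opSq M d) (fun t d => ?_) hmin p
  rw [map_add, map_smul, add_right_comm, norm_add_smul_sq_real,
    show xs + t • d - w = xs - w + t • d by abel, hM.opSq_add_smul]
  ring

theorem IsXUpdate.le_add_inner {f : E → EReal} {A : E →L[ℝ] F} {c : ℝ} {xk xk1 : E}
    {zk yk : F} (h : IsXUpdate f A c M xk zk yk xk1) (hf : ERealConvex f)
    (hbot : ∀ u, f u ≠ ⊥) (hM : (M : E →ₗ[ℝ] E).IsSymmetric) (p : E) :
    f xk1 ≤ f p + (c * ⟪A xk1 - zk + c⁻¹ • yk, A (p - xk1)⟫_ℝ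
      + ⟪M (xk1 - xk), p - xk1⟫_ℝ : ℝ) := by
  have e : ∀ u, A u - zk + c⁻¹ • yk = A u + (c⁻¹ • yk - zk) := fun u => by abel
  simp only [IsXUpdate, e] at h ⊢
  exact hf.le_add_inner_of_forall_prox_le hbot hM c A _ xk xk1 h p

theorem IsZUpdate.le_add_inner {g : F → EReal} {c : ℝ} {N : F →L[ℝ] F} {Ax zk yk zk1 : F}
    (h : IsZUpdate g c N Ax zk yk zk1) (hg : ERealConvex g) (hbot : ∀ u, g u ≠ ⊥)
    (hN : (N : F →ₗ[ℝ] F).IsSymmetric) (q : F) :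
    g zk1 ≤ g q + (c * ⟪Ax - zk1 + c⁻¹ • yk, zk1 - q⟫_ℝ + ⟪N (zk1 - zk), q - zk1⟫_ℝ : ℝ) := by
  have e : ∀ u, Ax - u + c⁻¹ • yk = (-ContinuousLinearMap.id ℝ F) u + (Ax + c⁻¹ • yk) :=
    fun u => by simp only [neg_apply, ContinuousLinearMap.id_apply]; abel
  simp only [IsZUpdate, e] at h ⊢
  convert hg.le_add_inner_of_forall_prox_le hbot hN c _ _ zk zk1 h q using 4
  simp only [neg_apply, ContinuousLinearMap.id_apply, neg_sub]

end ProximalStep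

section Multiplier

variable {F : Type*} [NormedAddCommGroup F] [InnerProductSpace ℝ F]

theorem inner_penalty_add_eq_of_multiplier_update {c : ℝ} (hc : c ≠ 0) {Ax z₀ z₁ y₀ y₁ : F}
    (hy : y₁ = y₀ + c • (Ax - z₁)) (Ap q v : F) :
    c * ⟪Ax - z₀ + c⁻¹ • y₀, Ap - Ax⟫_ℝ + c * ⟪Ax - z₁ + c⁻¹ • y₀, z₁ - q⟫_ℝ + ⟪v, Ax - z₁⟫_ℝ =
      ⟪y₁, Ap - q⟫_ℝ + c * ⟪z₁ - z₀, Ap - Ax⟫_ℝ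
        + (1/2) * (c⁻¹ * ‖v - y₀‖ ^ 2 - c⁻¹ * ‖v - y₁‖ ^ 2) - (1/2) * (c⁻¹ * ‖y₁ - y₀‖ ^ 2) := by
  have hres : Ax - z₁ = c⁻¹ • (y₁ - y₀) := by
    rw [hy, add_sub_cancel_left, smul_smul, inv_mul_cancel₀ hc, one_smul]
  have hz₁ : Ax - z₁ + c⁻¹ • y₀ = c⁻¹ • y₁ := by rw [hres, ← smul_add, sub_add_cancel]
  have hz₀ : Ax - z₀ + c⁻¹ • y₀ = c⁻¹ • y₁ + (z₁ - z₀) := by rw [← hz₁]; abel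
  have hsplit : ⟪y₁, Ap - q⟫_ℝ = ⟪y₁, Ap - Ax⟫_ℝ + ⟪y₁, z₁ - q⟫_ℝ + ⟪y₁, Ax - z₁⟫_ℝ := by
    rw [← inner_add_right, ← inner_add_right]; congr 1; abel
  have hv : ⟪v, Ax - z₁⟫_ℝ = ⟪y₁, Ax - z₁⟫_ℝ + c⁻¹ * ⟪y₁ - y₀, v - y₁⟫_ℝ := by
    rw [hres, real_inner_smul_right, real_inner_smul_right, real_inner_comm (v - y₁), ← mul_add,
      ← inner_add_left, add_sub_cancel]
  rw [hz₀, hz₁, inner_add_left, real_inner_smul_left, real_inner_smul_left, hv, hsplit,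
    real_inner_sub_sub_eq_norm_sq]
  field_simp
  ring

end Multiplier

theorem EReal.add_coe_add_add_coe_add_coe {a b : EReal} {s t r u w : ℝ}
    (h : s + t + r = u + w) : a + s + (b + t) + r = a + b + u + w := by
  have h' : (s : EReal) + t + r = u + w := by exact_mod_cast h
  calc a + s + (b + t) + r = a + b + ((s : EReal) + t + r) := by ac_rfl
    _ = a + b + u + w := by rw [h', add_assoc (a + b)]

theorem stmt0_general (n m : ℕ)
    (f : EuclideanSpace ℝ (Fin n) → EReal) (g : EuclideanSpace ℝ (Fin m) → EReal)
    (hfp : ERealProper f) (hfc : ERealConvex f)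
    (hgp : ERealProper g) (hgc : ERealConvex g)
    (A : EuclideanSpace ℝ (Fin n) →L[ℝ] EuclideanSpace ℝ (Fin m))
    (c : ℝ) (hc : 0 < c)
    (M₁ : EuclideanSpace ℝ (Fin n) →L[ℝ] EuclideanSpace ℝ (Fin n))
    (M₂ : EuclideanSpace ℝ (Fin m) →L[ℝ] EuclideanSpace ℝ (Fin m))
    (hM₁ : IsSplusOp M₁) (hM₂ : IsSplusOp M₂)
    (x : ℕ → EuclideanSpace ℝ (Fin n)) (z y : ℕ → EuclideanSpace ℝ (Fin m))
    (hx : ∀ k : ℕ, IsXUpdate f A c M₁ (x k) (z k) (y k) (x (k+1)))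
    (hz : ∀ k : ℕ, IsZUpdate g c M₂ (A (x (k+1))) (z k) (y k) (z (k+1)))
    (hy : ∀ k : ℕ, y (k+1) = y k + c • (A (x (k+1)) - z (k+1))) :
    ∀ k : ℕ, ∀ (p : EuclideanSpace ℝ (Fin n)) (q v : EuclideanSpace ℝ (Fin m)),
      Lagr f g A (x (k+1)) (z (k+1)) v ≤
        Lagr f g A p q (y (k+1)) +
          ((c * ⟪z (k+1) - z k, A (p - x (k+1))⟫_ℝ
            + (1/2) * (opSq M₁ (p - x k) - opSq M₁ (p - x (k+1))
                + opSq M₂ (q - z k) - opSq M₂ (q - z (k+1)))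
            + (1/2) * (c⁻¹ * ‖v - y k‖ ^ 2 - c⁻¹ * ‖v - y (k+1)‖ ^ 2)
            - (1/2) * (opSq M₁ (x (k+1) - x k) + opSq M₂ (z (k+1) - z k)
                + c⁻¹ * ‖y (k+1) - y k‖ ^ 2) : ℝ) : EReal) := by
  intro k p q v
  have hfx := (hx k).le_add_inner hfc hfp.1 hM₁.isSymmetric p
  have hgz := (hz k).le_add_inner hgc hgp.1 hM₂.isSymmetric q
  have hxM := hM₁.isSymmetric.inner_sub_sub_eq_opSq (x (k+1)) (x k) p
  have hzM := hM₂.isSymmetric.inner_sub_sub_eq_opSq (z (k+1)) (z k) q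
  have hyz := inner_penalty_add_eq_of_multiplier_update hc.ne' (hy k) (A p) q v (z₀ := z k)
  rw [map_sub] at hfx ⊢
  refine (add_le_add (add_le_add hfx hgz) le_rfl).trans
    (EReal.add_coe_add_add_coe_add_coe ?_).le
  linarith

theorem stmt0 (n m : ℕ)
    (f : EuclideanSpace ℝ (Fin n) → EReal) (g : EuclideanSpace ℝ (Fin m) → EReal)
    (hfp : ERealProper f) (hfc : ERealConvex f) (hfl : LowerSemicontinuous f)
    (hgp : ERealProper g) (hgc : ERealConvex g) (hgl : LowerSemicontinuous g)
    (A : EuclideanSpace ℝ (Fin n) →L[ℝ] EuclideanSpace ℝ (Fin m))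
    (c : ℝ) (hc : 0 < c)
    (M₁ : EuclideanSpace ℝ (Fin n) →L[ℝ] EuclideanSpace ℝ (Fin n))
    (M₂ : EuclideanSpace ℝ (Fin m) →L[ℝ] EuclideanSpace ℝ (Fin m))
    (hM₁ : IsSplusOp M₁) (hM₂ : IsSplusOp M₂)
    (x : ℕ → EuclideanSpace ℝ (Fin n)) (z y : ℕ → EuclideanSpace ℝ (Fin m))
    (hx : ∀ k : ℕ, IsXUpdate f A c M₁ (x k) (z k) (y k) (x (k+1)))
    (hz : ∀ k : ℕ, IsZUpdate g c M₂ (A (x (k+1))) (z k) (y k) (z (k+1)))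
    (hy : ∀ k : ℕ, y (k+1) = y k + c • (A (x (k+1)) - z (k+1))) :
    ∀ k : ℕ, ∀ (p : EuclideanSpace ℝ (Fin n)) (q v : EuclideanSpace ℝ (Fin m)),
      Lagr f g A (x (k+1)) (z (k+1)) v ≤
        Lagr f g A p q (y (k+1)) +
          ((c * ⟪z (k+1) - z k, A (p - x (k+1))⟫_ℝ
            + (1/2) * (opSq M₁ (p - x k) - opSq M₁ (p - x (k+1))
                + opSq M₂ (q - z k) - opSq M₂ (q - z (k+1)))
            + (1/2) * (c⁻¹ * ‖v - y k‖ ^ 2 - c⁻¹ * ‖v - y (k+1)‖ ^ 2)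
            - (1/2) * (opSq M₁ (x (k+1) - x k) + opSq M₂ (z (k+1) - z k)
                + c⁻¹ * ‖y (k+1) - y k‖ ^ 2) : ℝ) : EReal) :=
  stmt0_general n m f g hfp hfc hgp hgc A c hc M₁ M₂ hM₁ hM₂ x z y hx hz hy
end
end

section
/- Assume M₂ is positive definite and the Lagrangian l has a saddle point (x*, z*, y*). Let (xᵏ, zᵏ, yᵏ)_{k≥0} be a sequence generated by the AD-PMM algorithm. Then Σ_{k≥1} ‖z^{k+1} − zᵏ‖² < +∞, and there exists C ≥ 0 such that ‖Axᵏ − zᵏ‖ ≤ C/√k for all k ≥ 1. -/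
open scoped InnerProductSpace
open Filter

noncomputable section

/-!
Both subproblems are proximal steps, and a minimizer `p` of `f + q`, with `f` convex and `q` a
quadratic, satisfies the variational inequality `f p ≤ f u + ⟪∇q p, u - p⟫`. Adding these
inequalities for two runs of one AD-PMM step shows that the step is firmly nonexpansive for the
seminorm `‖x‖²_{M₁} + c‖z‖² + ‖z‖²_{M₂} + c⁻¹‖y‖²`. A saddle point is a fixed point of the step,
so the squared distance `Vₖ` of the iterates to it decreases by at least
`c‖Axᵏ⁺¹ - zᵏ‖² + ‖xᵏ - xᵏ⁺¹‖²_{M₁} + ‖zᵏ - zᵏ⁺¹‖²_{M₂}`. As `M₂` is coercive, this makes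
`∑ ‖zᵏ⁺¹ - zᵏ‖²` finite and bounds the squared step length `Eₖ` by a multiple of `Vₖ - Vₖ₊₁`.
Comparing two consecutive runs shows that `Eₖ` is nonincreasing, hence `(k + 1) Eₖ ≤ ∑ Eⱼ` is
bounded, and `c‖Axᵏ⁺¹ - zᵏ⁺¹‖² = c⁻¹‖yᵏ⁺¹ - yᵏ‖² ≤ Eₖ`.
-/

lemma sum_range_le_of_le_sub_succ {a V : ℕ → ℝ} (hV : ∀ k, 0 ≤ V k)
    (h : ∀ k, a k ≤ V k - V (k + 1)) (K : ℕ) : ∑ k ∈ Finset.range K, a k ≤ V 0 :=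
  calc ∑ k ∈ Finset.range K, a k ≤ ∑ k ∈ Finset.range K, (V k - V (k + 1)) :=
        Finset.sum_le_sum fun k _ => h k
    _ = V 0 - V K := Finset.sum_range_sub' V K
    _ ≤ V 0 := sub_le_self _ (hV K)

lemma summable_of_le_sub_succ {a V : ℕ → ℝ} (ha : ∀ k, 0 ≤ a k) (hV : ∀ k, 0 ≤ V k)
    (h : ∀ k, a k ≤ V k - V (k + 1)) : Summable a :=
  summable_of_sum_range_le ha (sum_range_le_of_le_sub_succ hV h)

lemma Antitone.succ_mul_le_of_le_sub_succ {a V : ℕ → ℝ} (ha : Antitone a) (hV : ∀ k, 0 ≤ V k)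
    (h : ∀ k, a k ≤ V k - V (k + 1)) (K : ℕ) : ((K : ℝ) + 1) * a K ≤ V 0 := by
  have := Finset.card_nsmul_le_sum (Finset.range (K + 1)) a (a K)
    fun k hk => ha (Nat.lt_succ_iff.mp (Finset.mem_range.mp hk))
  rw [Finset.card_range, nsmul_eq_mul, Nat.cast_succ] at this
  exact this.trans (sum_range_le_of_le_sub_succ hV h (K + 1))

lemma le_sqrt_div_div_sqrt_of_succ_mul_le {r : ℕ → ℝ} {c B : ℝ} (hc : 0 < c)
    (h : ∀ K : ℕ, ((K : ℝ) + 1) * (c * r (K + 1) ^ 2) ≤ B) (k : ℕ) (hk : 1 ≤ k) :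
    r k ≤ √(B / c) / √k := by
  obtain ⟨K, rfl⟩ := Nat.exists_eq_add_of_le' hk
  have hK : (0 : ℝ) < ((K + 1 : ℕ) : ℝ) := by positivity
  rw [le_div_iff₀ (Real.sqrt_pos.mpr hK)]
  calc r (K + 1) * √((K + 1 : ℕ) : ℝ) ≤ |r (K + 1)| * √((K + 1 : ℕ) : ℝ) := by
        gcongr; exact le_abs_self _
    _ = √(r (K + 1) ^ 2 * ((K + 1 : ℕ) : ℝ)) := by
        rw [Real.sqrt_mul (sq_nonneg _), Real.sqrt_sq_eq_abs]
    _ ≤ √(B / c) := by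
        gcongr
        rw [le_div_iff₀ hc]
        push_cast
        linarith [h K]

lemma nonneg_of_forall_Ioc_nonneg_add_mul {X S : ℝ} (h : ∀ t ∈ Set.Ioc (0 : ℝ) 1, 0 ≤ X + t * S) :
    0 ≤ X := by
  have hlim : Tendsto (fun t : ℝ => X + t * S) (nhdsWithin 0 (Set.Ioi 0)) (nhds X) := by
    have : Continuous (fun t : ℝ => X + t * S) := by fun_prop
    simpa using this.continuousWithinAt.tendsto (s := Set.Ioi 0) (x := 0)
  exact ge_of_tendsto hlim (eventually_of_mem (Ioc_mem_nhdsGT one_pos) h)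

lemma ERealProper.coe_toReal {E : Type*} {f : E → EReal} (hf : ERealProper f) {u : E}
    (hu : f u ≠ ⊤) : ((f u).toReal : EReal) = f u :=
  EReal.coe_toReal hu (hf.1 u)

section ADPMM

variable {E F : Type*} [NormedAddCommGroup E] [InnerProductSpace ℝ E]
  [NormedAddCommGroup F] [InnerProductSpace ℝ F]

lemma IsSplusOp.opSq_nonneg {U : E →L[ℝ] E} (hU : IsSplusOp U) (x : E) : 0 ≤ opSq U x :=
  hU.2 x

lemma exists_pos_mul_sq_norm_le_inner [FiniteDimensional ℝ F] {M : F →L[ℝ] F}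
    (hM : ∀ w, w ≠ 0 → 0 < ⟪w, M w⟫_ℝ) : ∃ μ > 0, ∀ w, μ * ‖w‖ ^ 2 ≤ ⟪w, M w⟫_ℝ := by
  rcases subsingleton_or_nontrivial F with hF | hF
  · exact ⟨1, one_pos, fun w => by simp [Subsingleton.elim w 0]⟩
  obtain ⟨w₀, hw₀, hmin⟩ := (isCompact_sphere (0 : F) 1).exists_isMinOn
    (NormedSpace.sphere_nonempty.mpr zero_le_one)
    (Continuous.continuousOn (f := fun w => ⟪w, M w⟫_ℝ) (by fun_prop))
  refine ⟨⟪w₀, M w₀⟫_ℝ, hM w₀ (ne_zero_of_mem_unit_sphere ⟨w₀, hw₀⟩), fun w => ?_⟩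
  rcases eq_or_ne w 0 with rfl | hw
  · simp
  have hnorm : 0 < ‖w‖ := norm_pos_iff.mpr hw
  have h₁ : ⟪w₀, M w₀⟫_ℝ ≤ ⟪‖w‖⁻¹ • w, M (‖w‖⁻¹ • w)⟫_ℝ :=
    hmin (by simpa using norm_smul_inv_norm (𝕜 := ℝ) hw)
  rwa [map_smul, real_inner_smul_left, real_inner_smul_right, ← mul_assoc, ← sq,
    inv_pow, ← div_eq_inv_mul, le_div_iff₀ (by positivity)] at h₁

def IsProxPoint (f : E → EReal) (T : E →L[ℝ] F) (c : ℝ) (M : E →L[ℝ] E) (b : F) (a p : E) :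
    Prop :=
  ∀ u : E, f p + (((c/2) * ‖T p - b‖ ^ 2 + (1/2) * opSq M (p - a) : ℝ) : EReal) ≤
    f u + (((c/2) * ‖T u - b‖ ^ 2 + (1/2) * opSq M (u - a) : ℝ) : EReal)

/-- The optimality condition `-∇q(p) ∈ ∂f(p)` for the quadratic `q` of `IsProxPoint`. -/
def IsProxStationary (f : E → EReal) (T : E →L[ℝ] F) (c : ℝ) (M : E →L[ℝ] E) (b : F) (a p : E) :
    Prop :=
  ∀ u : E, f p ≤ f u + ((c * ⟪T p - b, T (u - p)⟫_ℝ + ⟪p - a, M (u - p)⟫_ℝ : ℝ) : EReal)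

lemma proxQuadratic_add_smul {T : E →L[ℝ] F} {M : E →L[ℝ] E}
    (hM : (M : E →ₗ[ℝ] E).IsSymmetric) (c t : ℝ) (b : F) (a p d : E) :
    (c/2) * ‖T (p + t • d) - b‖ ^ 2 + (1/2) * opSq M (p + t • d - a)
      = (c/2) * ‖T p - b‖ ^ 2 + (1/2) * opSq M (p - a)
        + t * (c * ⟪T p - b, T d⟫_ℝ + ⟪p - a, M d⟫_ℝ)
        + t ^ 2 / 2 * (c * ‖T d‖ ^ 2 + opSq M d) := by
  have hM' : ⟪d, M (p - a)⟫_ℝ = ⟪p - a, M d⟫_ℝ :=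
    (hM d (p - a)).symm.trans (real_inner_comm _ _)
  rw [show T (p + t • d) - b = (T p - b) + t • T d by rw [map_add, map_smul]; abel,
    show p + t • d - a = (p - a) + t • d by abel]
  simp only [opSq, map_add, map_smul, ← real_inner_self_eq_norm_sq,
    inner_add_left, inner_add_right, real_inner_smul_left, real_inner_smul_right, hM',
    real_inner_comm (T d)]
  ring

lemma IsProxPoint.ne_top {f : E → EReal} (hf : ERealProper f) {T : E →L[ℝ] F} {c : ℝ}
    {M : E →L[ℝ] E} {b : F} {a p : E} (h : IsProxPoint f T c M b a p) : f p ≠ ⊤ := by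
  obtain ⟨u, hu⟩ := hf.2
  intro htop
  have := h u
  rw [htop, EReal.top_add_coe, top_le_iff] at this
  exact (EReal.add_lt_top hu (EReal.coe_ne_top _)).ne this

lemma IsProxPoint.isProxStationary {f : E → EReal} (hfp : ERealProper f) (hfc : ERealConvex f)
    {T : E →L[ℝ] F} {c : ℝ} {M : E →L[ℝ] E} (hM : (M : E →ₗ[ℝ] E).IsSymmetric) {b : F} {a p : E}
    (h : IsProxPoint f T c M b a p) : IsProxStationary f T c M b a p := by
  intro u
  by_cases hu : f u = ⊤
  · rw [hu, EReal.top_add_coe]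
    exact le_top
  rw [← hfp.coe_toReal hu, ← hfp.coe_toReal (h.ne_top hfp), ← EReal.coe_add, EReal.coe_le_coe_iff]
  set d := u - p
  set D := c * ⟪T p - b, T d⟫_ℝ + ⟪p - a, M d⟫_ℝ
  suffices ∀ t ∈ Set.Ioc (0 : ℝ) 1,
      0 ≤ ((f u).toReal - (f p).toReal + D) + t * ((c * ‖T d‖ ^ 2 + opSq M d) / 2) by
    linarith [nonneg_of_forall_Ioc_nonneg_add_mul this]
  rintro t ⟨ht0, ht1⟩
  have hseg : p + t • d = (1 - t) • p + t • u := by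
    simp only [d, smul_sub, sub_smul, one_smul]; abel
  have hconv := hfc p u (1 - t) t (by linarith) ht0.le (by ring)
  have hmin := h (p + t • d)
  rw [← hfp.coe_toReal hu, ← hfp.coe_toReal (h.ne_top hfp)] at hconv
  rw [← hfp.coe_toReal (h.ne_top hfp), hseg] at hmin
  have hreal := hmin.trans (add_le_add_left hconv _)
  rw [← EReal.coe_mul, ← EReal.coe_mul, ← EReal.coe_add, ← EReal.coe_add, ← EReal.coe_add,
    EReal.coe_le_coe_iff, ← hseg, proxQuadratic_add_smul hM] at hreal
  nlinarith

lemma IsProxStationary.inner_add_inner_nonpos {f : E → EReal} (hf : ERealProper f)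
    {T : E →L[ℝ] F} {c : ℝ} {M : E →L[ℝ] E} {b b' : F} {a a' p p' : E}
    (h : IsProxStationary f T c M b a p) (h' : IsProxStationary f T c M b' a' p') :
    c * ⟪T (p - p') - (b - b'), T (p - p')⟫_ℝ + ⟪(p - p') - (a - a'), M (p - p')⟫_ℝ ≤ 0 := by
  obtain ⟨u, hu⟩ := hf.2
  have hp : f p ≠ ⊤ := ((h u).trans_lt (EReal.add_lt_top hu (EReal.coe_ne_top _))).ne
  have hp' : f p' ≠ ⊤ := ((h' p).trans_lt (EReal.add_lt_top hp (EReal.coe_ne_top _))).ne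
  have h₁ := h p'
  have h₂ := h' p
  rw [← hf.coe_toReal hp, ← hf.coe_toReal hp', ← EReal.coe_add, EReal.coe_le_coe_iff] at h₁ h₂
  have e₁ : p' - p = -(p - p') := (neg_sub p p').symm
  simp only [e₁, map_neg, map_sub, inner_neg_right, inner_sub_left] at h₁ h₂ ⊢
  linarith

/-- One AD-PMM step `(x, z, y) ↦ (x', z', y')`, with both subproblems replaced by their
optimality conditions. -/
def IsStationaryStep (f : E → EReal) (g : F → EReal) (A : E →L[ℝ] F) (c : ℝ) (M₁ : E →L[ℝ] E)
    (M₂ : F →L[ℝ] F) (x : E) (z y : F) (x' : E) (z' y' : F) : Prop :=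
  IsProxStationary f A c M₁ (z - c⁻¹ • y) x x' ∧
    IsProxStationary g (ContinuousLinearMap.id ℝ F) c M₂ (A x' + c⁻¹ • y) z z' ∧
    y' = y + c • (A x' - z')

def pmmDistSq (c : ℝ) (M₁ : E →L[ℝ] E) (M₂ : F →L[ℝ] F) (x : E) (z y : F) (x' : E) (z' y' : F) :
    ℝ :=
  opSq M₁ (x - x') + c * ‖z - z'‖ ^ 2 + opSq M₂ (z - z') + c⁻¹ * ‖y - y'‖ ^ 2

/-- The variables stand for differences of two runs of a step: `x, z, y` of the old iterates,
`x', z'` of the new ones and `a` of `A x'`. -/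
lemma fejer_of_inner_nonpos {M₁ : E →L[ℝ] E} {M₂ : F →L[ℝ] F}
    (hM₁ : (M₁ : E →ₗ[ℝ] E).IsSymmetric) (hM₂ : (M₂ : F →ₗ[ℝ] F).IsSymmetric)
    {c : ℝ} (hc : c ≠ 0) {x x' : E} {z z' y a : F}
    (hx : c * ⟪a - (z - c⁻¹ • y), a⟫_ℝ + ⟪x' - x, M₁ x'⟫_ℝ ≤ 0)
    (hz : c * ⟪z' - (a + c⁻¹ • y), z'⟫_ℝ + ⟪z' - z, M₂ z'⟫_ℝ ≤ 0) :
    opSq M₁ x' + c * ‖z'‖ ^ 2 + opSq M₂ z' + c⁻¹ * ‖y + c • (a - z')‖ ^ 2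
      + c * ‖a - z‖ ^ 2 + opSq M₁ (x - x') + opSq M₂ (z - z')
    ≤ opSq M₁ x + c * ‖z‖ ^ 2 + opSq M₂ z + c⁻¹ * ‖y‖ ^ 2 := by
  have hy : c⁻¹ * ‖y + c • (a - z')‖ ^ 2
      = c⁻¹ * ‖y‖ ^ 2 + 2 * ⟪y, a - z'⟫_ℝ + c * ‖a - z'‖ ^ 2 := by
    rw [norm_add_sq_real, norm_smul, real_inner_smul_right, Real.norm_eq_abs, mul_pow, sq_abs]
    field_simp
  have h₁ : ⟪x, M₁ x'⟫_ℝ = ⟪x', M₁ x⟫_ℝ := (real_inner_comm _ _).trans (hM₁ x' x)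
  have h₂ : ⟪z, M₂ z'⟫_ℝ = ⟪z', M₂ z⟫_ℝ := (real_inner_comm _ _).trans (hM₂ z' z)
  rw [hy]
  simp only [opSq, ← real_inner_self_eq_norm_sq, map_sub, inner_sub_left, inner_sub_right,
    inner_add_left, real_inner_smul_left, mul_sub, mul_add, mul_inv_cancel_left₀ hc, h₁, h₂,
    real_inner_comm a z, real_inner_comm a z'] at hx hz ⊢
  linarith

variable {f : E → EReal} {g : F → EReal} {A : E →L[ℝ] F} {c : ℝ} {M₁ : E →L[ℝ] E}
  {M₂ : F →L[ℝ] F}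

lemma IsStationaryStep.pmmDistSq_le (hf : ERealProper f) (hg : ERealProper g)
    (hM₁ : (M₁ : E →ₗ[ℝ] E).IsSymmetric) (hM₂ : (M₂ : F →ₗ[ℝ] F).IsSymmetric) (hc : c ≠ 0)
    {x x' xh xh' : E} {z y z' y' zh yh zh' yh' : F}
    (h : IsStationaryStep f g A c M₁ M₂ x z y x' z' y')
    (hh : IsStationaryStep f g A c M₁ M₂ xh zh yh xh' zh' yh') :
    pmmDistSq c M₁ M₂ x' z' y' xh' zh' yh' + c * ‖A x' - A xh' - (z - zh)‖ ^ 2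
        + opSq M₁ ((x - xh) - (x' - xh')) + opSq M₂ ((z - zh) - (z' - zh'))
      ≤ pmmDistSq c M₁ M₂ x z y xh zh yh := by
  have hx := h.1.inner_add_inner_nonpos hf hh.1
  have hz := h.2.1.inner_add_inner_nonpos hg hh.2.1
  have eb : z - c⁻¹ • y - (zh - c⁻¹ • yh) = (z - zh) - c⁻¹ • (y - yh) := by
    rw [smul_sub]; abel
  have eb' : A x' + c⁻¹ • y - (A xh' + c⁻¹ • yh) = (A x' - A xh') + c⁻¹ • (y - yh) := by
    rw [smul_sub]; abel
  have ey : y + c • (A x' - z') - (yh + c • (A xh' - zh'))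
      = (y - yh) + c • ((A x' - A xh') - (z' - zh')) := by
    simp only [smul_sub]; abel
  rw [map_sub, eb] at hx
  rw [ContinuousLinearMap.id_apply, eb'] at hz
  have := fejer_of_inner_nonpos hM₁ hM₂ hc hx hz
  rw [pmmDistSq, pmmDistSq, h.2.2, hh.2.2, ey]
  linarith

lemma IsStationaryStep.pmmDistSq_succ_le (hf : ERealProper f) (hg : ERealProper g)
    (hM₁ : IsSplusOp M₁) (hM₂ : IsSplusOp M₂) (hc : 0 < c)
    {x x' x'' : E} {z y z' y' z'' y'' : F} (h : IsStationaryStep f g A c M₁ M₂ x z y x' z' y')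
    (h' : IsStationaryStep f g A c M₁ M₂ x' z' y' x'' z'' y'') :
    pmmDistSq c M₁ M₂ x' z' y' x'' z'' y'' ≤ pmmDistSq c M₁ M₂ x z y x' z' y' := by
  have := h.pmmDistSq_le hf hg hM₁.1 hM₂.1 hc.ne' h'
  have h₃ : 0 ≤ c * ‖A x' - A x'' - (z - z')‖ ^ 2 := by positivity
  linarith [hM₁.opSq_nonneg ((x - x') - (x' - x'')), hM₂.opSq_nonneg ((z - z') - (z' - z''))]

lemma IsXUpdate.isProxPoint {x x' : E} {z y : F} (h : IsXUpdate f A c M₁ x z y x') :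
    IsProxPoint f A c M₁ (z - c⁻¹ • y) x x' := by
  have e : ∀ v : F, v - (z - c⁻¹ • y) = v - z + c⁻¹ • y := fun v => by abel
  intro u
  simpa only [e] using h u

lemma IsZUpdate.isProxPoint {a z y z' : F} (h : IsZUpdate g c M₂ a z y z') :
    IsProxPoint g (ContinuousLinearMap.id ℝ F) c M₂ (a + c⁻¹ • y) z z' := by
  have e : ∀ w : F, ‖ContinuousLinearMap.id ℝ F w - (a + c⁻¹ • y)‖ = ‖a - w + c⁻¹ • y‖ :=
    fun w => by rw [norm_sub_rev, ContinuousLinearMap.id_apply, add_sub_right_comm]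
  intro u
  simpa only [e] using h u

lemma isStationaryStep_of_update (hfp : ERealProper f) (hfc : ERealConvex f)
    (hgp : ERealProper g) (hgc : ERealConvex g)
    (hM₁ : (M₁ : E →ₗ[ℝ] E).IsSymmetric) (hM₂ : (M₂ : F →ₗ[ℝ] F).IsSymmetric)
    {x x' : E} {z y z' y' : F} (hx : IsXUpdate f A c M₁ x z y x')
    (hz : IsZUpdate g c M₂ (A x') z y z') (hy : y' = y + c • (A x' - z')) :
    IsStationaryStep f g A c M₁ M₂ x z y x' z' y' :=
  ⟨hx.isProxPoint.isProxStationary hfp hfc hM₁, hz.isProxPoint.isProxStationary hgp hgc hM₂, hy⟩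

section Saddle

variable {xs : E} {zs ys : F}

lemma IsSaddle.lagr_ne_top (hf : ERealProper f) (hg : ERealProper g)
    (h : IsSaddle (Lagr f g A) xs zs ys) : f xs ≠ ⊤ ∧ g zs ≠ ⊤ := by
  obtain ⟨u, hu⟩ := hf.2
  obtain ⟨w, hw⟩ := hg.2
  have hlt : Lagr f g A xs zs ys < ⊤ :=
    (h u w ys).2.trans_lt (EReal.add_lt_top (EReal.add_lt_top hu hw).ne (EReal.coe_ne_top _))
  constructor
  · intro hx
    rw [Lagr, hx, EReal.top_add_of_ne_bot (hg.1 zs), EReal.top_add_coe] at hlt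
    exact hlt.false
  · intro hz
    rw [Lagr, hz, EReal.add_top_of_ne_bot (hf.1 xs), EReal.top_add_coe] at hlt
    exact hlt.false

lemma IsSaddle.map_eq (hf : ERealProper f) (hg : ERealProper g)
    (h : IsSaddle (Lagr f g A) xs zs ys) : A xs = zs := by
  obtain ⟨hfx, hgz⟩ := h.lagr_ne_top hf hg
  have h₁ := (h xs zs (ys + (A xs - zs))).1
  rw [Lagr, Lagr, ← hf.coe_toReal hfx, ← hg.coe_toReal hgz] at h₁
  norm_cast at h₁
  rw [inner_add_left, real_inner_self_eq_norm_sq] at h₁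
  exact sub_eq_zero.mp (norm_eq_zero.mp (pow_eq_zero_iff two_ne_zero |>.mp
    (le_antisymm (by linarith) (sq_nonneg _))))

lemma IsSaddle.isStationaryStep (hf : ERealProper f) (hg : ERealProper g) (hc : c ≠ 0)
    (h : IsSaddle (Lagr f g A) xs zs ys) : IsStationaryStep f g A c M₁ M₂ xs zs ys xs zs ys := by
  obtain ⟨hfx, hgz⟩ := h.lagr_ne_top hf hg
  have hA := h.map_eq hf hg
  refine ⟨fun u => ?_, fun w => ?_, by rw [hA, sub_self, smul_zero, add_zero]⟩
  · have h₁ := (h u zs ys).2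
    rw [Lagr, Lagr, ← hg.coe_toReal hgz, add_right_comm, add_right_comm (f u),
      (EReal.addLECancellable_coe _).add_le_add_iff_right, hA, sub_self, inner_zero_right,
      EReal.coe_zero, add_zero] at h₁
    convert h₁ using 3
    rw [hA, sub_sub_cancel, sub_self, inner_zero_left, add_zero, real_inner_smul_left,
      mul_inv_cancel_left₀ hc, map_sub, hA]
  · have h₁ := (h xs w ys).2
    rw [Lagr, Lagr, ← hf.coe_toReal hfx, add_assoc, add_assoc,
      (EReal.addLECancellable_coe _).add_le_add_iff_left, hA, sub_self, inner_zero_right,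
      EReal.coe_zero, add_zero] at h₁
    convert h₁ using 3
    rw [ContinuousLinearMap.id_apply, ContinuousLinearMap.id_apply, hA, sub_add_cancel_left,
      sub_self, inner_zero_left, add_zero, inner_neg_left, real_inner_smul_left,
      mul_neg, mul_inv_cancel_left₀ hc, ← inner_neg_right, neg_sub]

lemma IsStationaryStep.fejer (hf : ERealProper f) (hg : ERealProper g)
    (hM₁ : (M₁ : E →ₗ[ℝ] E).IsSymmetric) (hM₂ : (M₂ : F →ₗ[ℝ] F).IsSymmetric) (hc : c ≠ 0)
    {x x' : E} {z y z' y' : F} (h : IsStationaryStep f g A c M₁ M₂ x z y x' z' y')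
    (hs : IsSaddle (Lagr f g A) xs zs ys) :
    pmmDistSq c M₁ M₂ x' z' y' xs zs ys
        + (c * ‖A x' - z‖ ^ 2 + opSq M₁ (x - x') + opSq M₂ (z - z'))
      ≤ pmmDistSq c M₁ M₂ x z y xs zs ys := by
  have := h.pmmDistSq_le hf hg hM₁ hM₂ hc (hs.isStationaryStep hf hg hc)
  rw [hs.map_eq hf hg, sub_sub_sub_cancel_right, sub_sub_sub_cancel_right,
    sub_sub_sub_cancel_right] at this
  linarith

end Saddle

lemma pmmDistSq_nonneg (hM₁ : IsSplusOp M₁) (hM₂ : IsSplusOp M₂) (hc : 0 ≤ c) (x x' : E)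
    (z y z' y' : F) : 0 ≤ pmmDistSq c M₁ M₂ x z y x' z' y' := by
  have h₃ : 0 ≤ c * ‖z - z'‖ ^ 2 := by positivity
  have h₄ : 0 ≤ c⁻¹ * ‖y - y'‖ ^ 2 := by positivity
  rw [pmmDistSq]
  linarith [hM₁.opSq_nonneg (x - x'), hM₂.opSq_nonneg (z - z')]

lemma inv_mul_sq_norm_sub_add_smul (hc : c ≠ 0) (y v : F) :
    c⁻¹ * ‖y - (y + c • v)‖ ^ 2 = c * ‖v‖ ^ 2 := by
  rw [sub_add_cancel_left, norm_neg, norm_smul, Real.norm_eq_abs, mul_pow, sq_abs]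
  field_simp

lemma mul_sq_norm_sub_le_pmmDistSq (hM₁ : IsSplusOp M₁) (hM₂ : IsSplusOp M₂) (hc : 0 < c)
    (x x' : E) (z y z' : F) :
    c * ‖A x' - z'‖ ^ 2 ≤ pmmDistSq c M₁ M₂ x z y x' z' (y + c • (A x' - z')) := by
  have h₃ : 0 ≤ c * ‖z - z'‖ ^ 2 := by positivity
  rw [pmmDistSq, inv_mul_sq_norm_sub_add_smul hc.ne']
  linarith [hM₁.opSq_nonneg (x - x'), hM₂.opSq_nonneg (z - z')]

lemma pmmDistSq_le_mul (hM₁ : IsSplusOp M₁) (hM₂ : IsSplusOp M₂) (hc : 0 < c) {μ : ℝ}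
    (hμ : 0 < μ) (hcoer : ∀ w, μ * ‖w‖ ^ 2 ≤ opSq M₂ w) (x x' : E) (z y z' : F) :
    pmmDistSq c M₁ M₂ x z y x' z' (y + c • (A x' - z'))
      ≤ (2 + 3 * c / μ) * (c * ‖A x' - z‖ ^ 2 + opSq M₁ (x - x') + opSq M₂ (z - z')) := by
  have hsplit : ‖A x' - z'‖ ^ 2 ≤ 2 * (‖A x' - z‖ ^ 2 + ‖z - z'‖ ^ 2) :=
    calc ‖A x' - z'‖ ^ 2 = ‖(A x' - z) + (z - z')‖ ^ 2 := by rw [sub_add_sub_cancel]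
      _ ≤ (‖A x' - z‖ + ‖z - z'‖) ^ 2 := by gcongr; exact norm_add_le _ _
      _ ≤ 2 * (‖A x' - z‖ ^ 2 + ‖z - z'‖ ^ 2) := add_sq_le
  have hcμ : 0 ≤ c / μ := by positivity
  have hz : c * ‖z - z'‖ ^ 2 ≤ c / μ * opSq M₂ (z - z') :=
    calc c * ‖z - z'‖ ^ 2 = c / μ * (μ * ‖z - z'‖ ^ 2) := by field_simp
      _ ≤ c / μ * opSq M₂ (z - z') := mul_le_mul_of_nonneg_left (hcoer _) hcμ
  have h₁ := hM₁.opSq_nonneg (x - x')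
  have h₃ : 0 ≤ c * ‖A x' - z‖ ^ 2 := by positivity
  rw [pmmDistSq, inv_mul_sq_norm_sub_add_smul hc.ne']
  linear_combination mul_le_mul_of_nonneg_left hsplit hc.le + 3 * hz + h₁
    + hM₂.opSq_nonneg (z - z') + 3 * mul_nonneg hcμ h₁ + 3 * mul_nonneg hcμ h₃

end ADPMM

theorem stmt3_general (n m : ℕ)
    (f : EuclideanSpace ℝ (Fin n) → EReal) (g : EuclideanSpace ℝ (Fin m) → EReal)
    (hfp : ERealProper f) (hfc : ERealConvex f)
    (hgp : ERealProper g) (hgc : ERealConvex g)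
    (A : EuclideanSpace ℝ (Fin n) →L[ℝ] EuclideanSpace ℝ (Fin m))
    (c : ℝ) (hc : 0 < c)
    (M₁ : EuclideanSpace ℝ (Fin n) →L[ℝ] EuclideanSpace ℝ (Fin n))
    (M₂ : EuclideanSpace ℝ (Fin m) →L[ℝ] EuclideanSpace ℝ (Fin m))
    (hM₁ : IsSplusOp M₁) (hM₂ : IsSplusOp M₂)
    (x : ℕ → EuclideanSpace ℝ (Fin n)) (z y : ℕ → EuclideanSpace ℝ (Fin m))
    (hx : ∀ k : ℕ, IsXUpdate f A c M₁ (x k) (z k) (y k) (x (k+1)))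
    (hz : ∀ k : ℕ, IsZUpdate g c M₂ (A (x (k+1))) (z k) (y k) (z (k+1)))
    (hy : ∀ k : ℕ, y (k+1) = y k + c • (A (x (k+1)) - z (k+1)))
    (hM₂pd : ∀ w : EuclideanSpace ℝ (Fin m), w ≠ 0 → 0 < ⟪w, M₂ w⟫_ℝ)
    (xs : EuclideanSpace ℝ (Fin n)) (zs ys : EuclideanSpace ℝ (Fin m))
    (hsp : IsSaddle (Lagr f g A) xs zs ys) :
    Summable (fun k : ℕ => ‖z (k+2) - z (k+1)‖ ^ 2) ∧
    ∃ C : ℝ, 0 ≤ C ∧ ∀ k : ℕ, 1 ≤ k → ‖A (x k) - z k‖ ≤ C / Real.sqrt (k : ℝ) := by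
  have hstep k : IsStationaryStep f g A c M₁ M₂ (x k) (z k) (y k) (x (k+1)) (z (k+1)) (y (k+1)) :=
    isStationaryStep_of_update hfp hfc hgp hgc hM₁.1 hM₂.1 (hx k) (hz k) (hy k)
  set V := fun k => pmmDistSq c M₁ M₂ (x k) (z k) (y k) xs zs ys
  have hV k : 0 ≤ V k := pmmDistSq_nonneg hM₁ hM₂ hc.le _ _ _ _ _ _
  have hfejer k : V (k+1) + (c * ‖A (x (k+1)) - z k‖ ^ 2 + opSq M₁ (x k - x (k+1))
      + opSq M₂ (z k - z (k+1))) ≤ V k :=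
    (hstep k).fejer hfp hgp hM₁.1 hM₂.1 hc.ne' hsp
  obtain ⟨μ, hμ, hcoer⟩ : ∃ μ > 0, ∀ w, μ * ‖w‖ ^ 2 ≤ opSq M₂ w :=
    exists_pos_mul_sq_norm_le_inner hM₂pd
  constructor
  · refine (summable_nat_add_iff (f := fun k => ‖z (k + 1) - z k‖ ^ 2) 1).mpr
      (summable_of_le_sub_succ (V := fun k => V k / μ) (fun k => by positivity)
        (fun k => div_nonneg (hV k) hμ.le) fun k => ?_)
    rw [← sub_div, le_div_iff₀ hμ, norm_sub_rev, mul_comm]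
    linarith [hfejer k, hcoer (z k - z (k+1)), hM₁.opSq_nonneg (x k - x (k+1)),
      (by positivity : 0 ≤ c * ‖A (x (k+1)) - z k‖ ^ 2)]
  set E := fun k => pmmDistSq c M₁ M₂ (x k) (z k) (y k) (x (k+1)) (z (k+1)) (y (k+1))
  set κ := 2 + 3 * c / μ
  have hκ : 0 ≤ κ := by positivity
  have hE k : E k ≤ κ * V k - κ * V (k+1) := by
    have := hy k ▸ pmmDistSq_le_mul hM₁ hM₂ hc hμ hcoer (x k) (x (k+1)) (z k) (y k) (z (k+1))
    linarith [mul_le_mul_of_nonneg_left (hfejer k) hκ]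
  have hanti : Antitone E := antitone_nat_of_succ_le fun k =>
    (hstep k).pmmDistSq_succ_le hfp hgp hM₁ hM₂ hc (hstep (k+1))
  refine ⟨√(κ * V 0 / c), Real.sqrt_nonneg _,
    le_sqrt_div_div_sqrt_of_succ_mul_le (r := fun k => ‖A (x k) - z k‖) hc fun K => ?_⟩
  calc ((K : ℝ) + 1) * (c * ‖A (x (K+1)) - z (K+1)‖ ^ 2) ≤ ((K : ℝ) + 1) * E K := by
        gcongr
        simpa only [E, hy K] using mul_sq_norm_sub_le_pmmDistSq (A := A) hM₁ hM₂ hc _ _ _ (y K) _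
    _ ≤ κ * V 0 := hanti.succ_mul_le_of_le_sub_succ (fun k => mul_nonneg hκ (hV k)) hE K

theorem stmt3 (n m : ℕ)
    (f : EuclideanSpace ℝ (Fin n) → EReal) (g : EuclideanSpace ℝ (Fin m) → EReal)
    (hfp : ERealProper f) (hfc : ERealConvex f) (hfl : LowerSemicontinuous f)
    (hgp : ERealProper g) (hgc : ERealConvex g) (hgl : LowerSemicontinuous g)
    (A : EuclideanSpace ℝ (Fin n) →L[ℝ] EuclideanSpace ℝ (Fin m))
    (c : ℝ) (hc : 0 < c)
    (M₁ : EuclideanSpace ℝ (Fin n) →L[ℝ] EuclideanSpace ℝ (Fin n))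
    (M₂ : EuclideanSpace ℝ (Fin m) →L[ℝ] EuclideanSpace ℝ (Fin m))
    (hM₁ : IsSplusOp M₁) (hM₂ : IsSplusOp M₂)
    (x : ℕ → EuclideanSpace ℝ (Fin n)) (z y : ℕ → EuclideanSpace ℝ (Fin m))
    (hx : ∀ k : ℕ, IsXUpdate f A c M₁ (x k) (z k) (y k) (x (k+1)))
    (hz : ∀ k : ℕ, IsZUpdate g c M₂ (A (x (k+1))) (z k) (y k) (z (k+1)))
    (hy : ∀ k : ℕ, y (k+1) = y k + c • (A (x (k+1)) - z (k+1)))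
    (hM₂pd : ∀ w : EuclideanSpace ℝ (Fin m), w ≠ 0 → 0 < ⟪w, M₂ w⟫_ℝ)
    (xs : EuclideanSpace ℝ (Fin n)) (zs ys : EuclideanSpace ℝ (Fin m))
    (hsp : IsSaddle (Lagr f g A) xs zs ys) :
    Summable (fun k : ℕ => ‖z (k+2) - z (k+1)‖ ^ 2) ∧
    ∃ C : ℝ, 0 ≤ C ∧ ∀ k : ℕ, 1 ≤ k → ‖A (x k) - z k‖ ≤ C / Real.sqrt (k : ℝ) :=
  stmt3_general n m f g hfp hfc hgp hgc A c hc M₁ M₂ hM₁ hM₂ x z y hx hz hy hM₂pd xs zs ys hsp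
end
end

section
/- Let (xᵏ, zᵏ, yᵏ)_{k≥0} be a sequence generated by the variable-metric ADMM algorithm. Then for all k ≥ 0 and all (x, z, y) ∈ H × G × G: l(x^{k+1}, z^{k+1}, y) ≤ l(x, z, y^{k+1}) + c⟨z^{k+1} − zᵏ, A(x − x^{k+1})⟩ + (1/2)(‖x − xᵏ‖²_{M₁ᵏ} + ‖z − zᵏ‖²_{M₂ᵏ} + c⁻¹‖y − yᵏ‖²) − (1/2)(‖x − x^{k+1}‖²_{M₁ᵏ} + ‖z − z^{k+1}‖²_{M₂ᵏ} + c⁻¹‖y − y^{k+1}‖²) − (1/2)(‖x^{k+1} − xᵏ‖²_{M₁ᵏ} − L‖x^{k+1} − xᵏ‖² + ‖z^{k+1} − zᵏ‖²_{M₂ᵏ} + c⁻¹‖y^{k+1} − yᵏ‖²). -/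
open scoped InnerProductSpace
open Filter

noncomputable section

/-! Each update minimizes a convex function plus a quadratic, so comparing the minimizer with
the points of a segment yields a variational inequality for `f (x (k+1))` and `g (z (k+1))`.
The linearized smooth part costs at most `L/2 ‖x (k+1) - x k‖²` by convexity of `h` and the
descent lemma. The multiplier update turns the residual `A x (k+1) - z (k+1)` into
`c⁻¹ (y (k+1) - y k)`, and the polarization identity `2⟪p - b, M (b - a)⟫ = ‖p - a‖²_M -
‖p - b‖²_M - ‖b - a‖²_M` turns all cross terms into differences of squared distances. -/

section Gradient

open Set AffineMap

variable {E : Type*} [NormedAddCommGroup E] [InnerProductSpace ℝ E] [CompleteSpace E]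
  {h : E → ℝ} {h' : E → E}

lemma hasDerivAt_comp_lineMap_of_hasGradientAt (hgrad : ∀ u, HasGradientAt h (h' u) u)
    (a b : E) (t : ℝ) :
    HasDerivAt (fun s : ℝ => h (lineMap a b s)) ⟪h' (lineMap a b t), b - a⟫_ℝ t :=
  (hgrad (lineMap a b t)).hasFDerivAt.comp_hasDerivAt t hasDerivAt_lineMap

lemma ConvexOn.add_inner_gradient_le (hconv : ConvexOn ℝ univ h)
    (hgrad : ∀ u, HasGradientAt h (h' u) u) (a b : E) :
    h a + ⟪b - a, h' a⟫_ℝ ≤ h b := by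
  have hslope := (hconv.comp_affineMap (lineMap a b)).le_slope_of_hasDerivAt
    (mem_univ 0) (mem_univ 1) zero_lt_one (hasDerivAt_comp_lineMap_of_hasGradientAt hgrad a b 0)
  simp only [Function.comp_def, slope_def_field, lineMap_apply_zero, lineMap_apply_one] at hslope
  rw [real_inner_comm]
  linarith

lemma le_add_inner_gradient_add_sq (hgrad : ∀ u, HasGradientAt h (h' u) u) {K : NNReal}
    (hlip : LipschitzWith K h') (a b : E) :
    h b ≤ h a + ⟪b - a, h' a⟫_ℝ + K / 2 * ‖b - a‖ ^ 2 := by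
  set w := b - a
  have hderiv (t : ℝ) : HasDerivAt (fun s : ℝ => h (lineMap a b s) - s * ⟪h' a, w⟫_ℝ)
      (⟪h' (lineMap a b t) - h' a, w⟫_ℝ) t := by
    rw [inner_sub_left]
    exact (hasDerivAt_comp_lineMap_of_hasGradientAt hgrad a b t).sub (hasDerivAt_mul_const _)
  have hbound (t : ℝ) : HasDerivAt (fun s : ℝ => h a + K / 2 * s ^ 2 * ‖w‖ ^ 2)
      (K * t * ‖w‖ ^ 2) t :=
    ((((hasDerivAt_pow 2 t).const_mul (K / 2 : ℝ)).mul_const (‖w‖ ^ 2)).const_add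
      (h a)).congr_deriv (by push_cast; ring)
  have key := image_le_of_deriv_right_le_deriv_boundary
    (fun t _ => (hderiv t).continuousAt.continuousWithinAt)
    (fun t _ => (hderiv t).hasDerivWithinAt) (by simp)
    (fun t _ => (hbound t).continuousAt.continuousWithinAt)
    (fun t _ => (hbound t).hasDerivWithinAt) ?_ (right_mem_Icc.2 zero_le_one)
  · simp only [lineMap_apply_one, one_mul, one_pow] at key
    rw [real_inner_comm]
    linarith
  · intro t ht
    calc ⟪h' (lineMap a b t) - h' a, w⟫_ℝ ≤ ‖h' (lineMap a b t) - h' a‖ * ‖w‖ :=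
          real_inner_le_norm _ _
      _ ≤ K * ‖lineMap a b t - a‖ * ‖w‖ := by
          gcongr
          simpa [dist_eq_norm] using hlip.dist_le_mul (lineMap a b t) a
      _ = K * t * ‖w‖ ^ 2 := by
          rw [← vsub_eq_sub, lineMap_vsub_left, vsub_eq_sub, norm_smul, Real.norm_of_nonneg ht.1]
          ring

lemma ConvexOn.add_inner_gradient_le_add_sq (hconv : ConvexOn ℝ univ h)
    (hgrad : ∀ u, HasGradientAt h (h' u) u) {K : NNReal} (hlip : LipschitzWith K h') (a b p : E) :
    h b + ⟪p - b, h' a⟫_ℝ ≤ h p + K / 2 * ‖b - a‖ ^ 2 := by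
  have hlower := hconv.add_inner_gradient_le hgrad a p
  have hupper := le_add_inner_gradient_add_sq hgrad hlip a b
  have hsplit : ⟪p - a, h' a⟫_ℝ = ⟪p - b, h' a⟫_ℝ + ⟪b - a, h' a⟫_ℝ := by
    rw [← inner_add_left, sub_add_sub_cancel]
  linarith

end Gradient

section Minimizer

open Topology

variable {E F : Type*} [NormedAddCommGroup E] [InnerProductSpace ℝ E]
  [NormedAddCommGroup F] [InnerProductSpace ℝ F]

lemma opSq_add {M : E →L[ℝ] E} (hM : ∀ a b : E, ⟪M a, b⟫_ℝ = ⟪a, M b⟫_ℝ) (u w : E) :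
    opSq M (u + w) = opSq M u + 2 * ⟪w, M u⟫_ℝ + opSq M w := by
  have hsymm : ⟪u, M w⟫_ℝ = ⟪w, M u⟫_ℝ := by rw [← hM, real_inner_comm]
  simp only [opSq, map_add, inner_add_left, inner_add_right, hsymm]
  ring

lemma opSq_smul (M : E →L[ℝ] E) (t : ℝ) (w : E) : opSq M (t • w) = t ^ 2 * opSq M w := by
  simp only [opSq, map_smul, real_inner_smul_left, real_inner_smul_right]
  ring

lemma two_mul_inner_sub_apply_sub {M : E →L[ℝ] E} (hM : ∀ a b : E, ⟪M a, b⟫_ℝ = ⟪a, M b⟫_ℝ)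
    (p a b : E) :
    2 * ⟪p - b, M (b - a)⟫_ℝ = opSq M (p - a) - opSq M (p - b) - opSq M (b - a) := by
  have := opSq_add hM (b - a) (p - b)
  rw [sub_add_sub_cancel'] at this
  linarith

lemma norm_add_smul_sq (u w : F) (t : ℝ) :
    ‖u + t • w‖ ^ 2 = ‖u‖ ^ 2 + 2 * t * ⟪w, u⟫_ℝ + t ^ 2 * ‖w‖ ^ 2 := by
  rw [norm_add_sq_real, real_inner_smul_right, norm_smul, Real.norm_eq_abs, mul_pow, sq_abs,
    real_inner_comm]
  ring

/-- Compare `x₁` with the points `x₁ + t • (p - x₁)`, `0 < t < 1`, divide by `t` and let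
`t → 0⁺`. -/
lemma ERealConvex.le_add_of_forall_add_le_add {f : E → EReal} (hfc : ERealConvex f)
    (hbot : ∀ u, f u ≠ ⊥) {φ : E → ℝ} {x₁ p : E} {D Q : ℝ}
    (hmin : ∀ u, f x₁ + φ x₁ ≤ f u + φ u)
    (hφ : ∀ t : ℝ, φ (x₁ + t • (p - x₁)) = φ x₁ + t * D + t ^ 2 * Q) :
    f x₁ ≤ f p + D := by
  by_cases hp : f p = ⊤
  · simp [hp]
  set b := (f p).toReal
  have hfp : f p = b := (EReal.coe_toReal hp (hbot p)).symm
  have hx : f x₁ ≠ ⊤ := fun hx => by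
    have := hmin p
    rw [hx, hfp, EReal.top_add_coe, top_le_iff, ← EReal.coe_add] at this
    exact EReal.coe_ne_top _ this
  set a := (f x₁).toReal
  have hfx : f x₁ = a := (EReal.coe_toReal hx (hbot x₁)).symm
  have hsecant : ∀ t ∈ Set.Ioo (0 : ℝ) 1, a ≤ b + D + t * Q := by
    intro t ⟨ht0, ht1⟩
    have hmid : (1 - t) • x₁ + t • p = x₁ + t • (p - x₁) := by module
    have hconv := hfc x₁ p (1 - t) t (by linarith) ht0.le (by ring)
    rw [hmid] at hconv
    have := (hmin _).trans (add_le_add_left hconv _)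
    rw [hfx, hfp, hφ] at this
    norm_cast at this
    nlinarith
  have hlim : Tendsto (fun t : ℝ => b + D + t * Q) (𝓝[>] 0) (𝓝 (b + D)) := by
    have hcont : Continuous fun t : ℝ => b + D + t * Q := by fun_prop
    simpa using (hcont.tendsto 0).mono_left nhdsWithin_le_nhds
  have hab : a ≤ b + D := ge_of_tendsto hlim <|
    Filter.mem_of_superset (Ioo_mem_nhdsGT zero_lt_one) hsecant
  rw [hfx, hfp]
  exact_mod_cast hab

lemma IsXUpdateGrad.le_add {f : E → EReal} {h' : E → E} {A : E →L[ℝ] F} {c : ℝ}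
    {M : E →L[ℝ] E} {xk xk1 : E} {zk yk : F} (hx : IsXUpdateGrad f h' A c M xk zk yk xk1)
    (hfc : ERealConvex f) (hbot : ∀ u, f u ≠ ⊥) (hM : ∀ a b : E, ⟪M a, b⟫_ℝ = ⟪a, M b⟫_ℝ)
    (p : E) :
    f xk1 ≤ f p + ((⟪p - xk1, h' xk⟫_ℝ + c * ⟪A (p - xk1), A xk1 - zk + c⁻¹ • yk⟫_ℝ
      + ⟪p - xk1, M (xk1 - xk)⟫_ℝ : ℝ) : EReal) := by
  refine hfc.le_add_of_forall_add_le_add hbot (φ := fun u => ⟪u - xk, h' xk⟫_ℝ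
    + c / 2 * ‖A u - zk + c⁻¹ • yk‖ ^ 2 + 1 / 2 * opSq M (u - xk)) hx
    (Q := c / 2 * ‖A (p - xk1)‖ ^ 2 + 1 / 2 * opSq M (p - xk1)) fun t => ?_
  have hx' : xk1 + t • (p - xk1) - xk = (xk1 - xk) + t • (p - xk1) := by abel
  have hAx : A (xk1 + t • (p - xk1)) - zk + c⁻¹ • yk
      = (A xk1 - zk + c⁻¹ • yk) + t • A (p - xk1) := by
    rw [map_add, map_smul]; abel
  simp only [hx', hAx, inner_add_left, real_inner_smul_left, norm_add_smul_sq, opSq_add hM,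
    opSq_smul]
  ring

lemma IsZUpdate.le_add {g : F → EReal} {c : ℝ} {M : F →L[ℝ] F} {Ax zk yk zk1 : F}
    (hz : IsZUpdate g c M Ax zk yk zk1)
    (hgc : ERealConvex g) (hbot : ∀ u, g u ≠ ⊥) (hM : ∀ a b : F, ⟪M a, b⟫_ℝ = ⟪a, M b⟫_ℝ)
    (q : F) :
    g zk1 ≤ g q + ((c * ⟪zk1 - q, Ax - zk1 + c⁻¹ • yk⟫_ℝ
      + ⟪q - zk1, M (zk1 - zk)⟫_ℝ : ℝ) : EReal) := by
  refine hgc.le_add_of_forall_add_le_add hbot (φ := fun w => c / 2 * ‖Ax - w + c⁻¹ • yk‖ ^ 2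
    + 1 / 2 * opSq M (w - zk)) hz
    (Q := c / 2 * ‖zk1 - q‖ ^ 2 + 1 / 2 * opSq M (q - zk1)) fun t => ?_
  have hz' : zk1 + t • (q - zk1) - zk = (zk1 - zk) + t • (q - zk1) := by abel
  have hAz : Ax - (zk1 + t • (q - zk1)) + c⁻¹ • yk = (Ax - zk1 + c⁻¹ • yk) + t • (zk1 - q) := by
    module
  simp only [hz', hAz, norm_add_smul_sq, opSq_add hM, opSq_smul, real_inner_smul_left]
  ring

end Minimizer

section Lagrangian

variable {E F : Type*} [NormedAddCommGroup E] [InnerProductSpace ℝ E]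
  [NormedAddCommGroup F] [InnerProductSpace ℝ F]

lemma LagrH_le_LagrH_add {f : E → EReal} {h : E → ℝ} {g : F → EReal} {A : E →L[ℝ] F}
    {p p' : E} {q q' v v' : F} {α β ε : ℝ} (hf : f p ≤ f p' + α) (hg : g q ≤ g q' + β)
    (hε : α + β + h p + ⟪v, A p - q⟫_ℝ ≤ h p' + ⟪v', A p' - q'⟫_ℝ + ε) :
    LagrH f h g A p q v ≤ LagrH f h g A p' q' v' + ε :=
  calc LagrH f h g A p q v = f p + g q + ((h p + ⟪v, A p - q⟫_ℝ : ℝ) : EReal) := by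
        simp only [LagrH, EReal.coe_add]; abel
    _ ≤ (f p' + α) + (g q' + β) + ((h p + ⟪v, A p - q⟫_ℝ : ℝ) : EReal) := by gcongr
    _ = f p' + g q' + ((α + β + h p + ⟪v, A p - q⟫_ℝ : ℝ) : EReal) := by
        simp only [EReal.coe_add]; abel
    _ ≤ f p' + g q' + ((h p' + ⟪v', A p' - q'⟫_ℝ + ε : ℝ) : EReal) := by
        gcongr
    _ = LagrH f h g A p' q' v' + ε := by
        simp only [LagrH, EReal.coe_add]; abel

lemma coupling_eq_of_multiplier_update {A : E →L[ℝ] F} {c : ℝ} (hc : c ≠ 0) {x₁ : E}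
    {z₁ y₀ y₁ : F} (hy : y₁ = y₀ + c • (A x₁ - z₁)) (z₀ : F) (p : E) (q v : F) :
    c * ⟪A (p - x₁), A x₁ - z₀ + c⁻¹ • y₀⟫_ℝ + c * ⟪z₁ - q, A x₁ - z₁ + c⁻¹ • y₀⟫_ℝ
      + ⟪v, A x₁ - z₁⟫_ℝ
      = ⟪y₁, A p - q⟫_ℝ + c * ⟪z₁ - z₀, A (p - x₁)⟫_ℝ
        + (c⁻¹ * ‖v - y₀‖ ^ 2 - c⁻¹ * ‖v - y₁‖ ^ 2 - c⁻¹ * ‖y₁ - y₀‖ ^ 2) / 2 := by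
  have hres : A x₁ - z₁ + c⁻¹ • y₀ = c⁻¹ • y₁ := by
    rw [hy, smul_add, inv_smul_smul₀ hc]; abel
  have hres_x : c * ⟪A (p - x₁), A x₁ - z₀ + c⁻¹ • y₀⟫_ℝ
      = ⟪A (p - x₁), y₁⟫_ℝ + c * ⟪z₁ - z₀, A (p - x₁)⟫_ℝ := by
    rw [show A x₁ - z₀ + c⁻¹ • y₀ = c⁻¹ • y₁ + (z₁ - z₀) by rw [← hres]; abel,
      inner_add_right, real_inner_smul_right, real_inner_comm (z₁ - z₀)]
    field_simp
  have hres_z : c * ⟪z₁ - q, A x₁ - z₁ + c⁻¹ • y₀⟫_ℝ = ⟪z₁ - q, y₁⟫_ℝ := by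
    rw [hres, real_inner_smul_right]; field_simp
  have hdual : c⁻¹ * ‖v - y₀‖ ^ 2 - c⁻¹ * ‖v - y₁‖ ^ 2 - c⁻¹ * ‖y₁ - y₀‖ ^ 2
      = 2 * ⟪v - y₁, A x₁ - z₁⟫_ℝ := by
    have hstep : y₁ - y₀ = c • (A x₁ - z₁) := by rw [hy]; abel
    rw [← sub_add_sub_cancel v y₁ y₀, norm_add_sq_real, hstep, real_inner_smul_right]
    field_simp
    ring
  have hlin : ⟪A (p - x₁), y₁⟫_ℝ + ⟪z₁ - q, y₁⟫_ℝ + ⟪v, A x₁ - z₁⟫_ℝ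
      = ⟪y₁, A p - q⟫_ℝ + ⟪v - y₁, A x₁ - z₁⟫_ℝ := by
    simp only [map_sub, inner_sub_left, inner_sub_right, real_inner_comm y₁]
    ring
  linarith

end Lagrangian

theorem stmt6_general {H G : Type*}
    [NormedAddCommGroup H] [InnerProductSpace ℝ H] [CompleteSpace H]
    [NormedAddCommGroup G] [InnerProductSpace ℝ G]
    (f : H → EReal) (g : G → EReal)
    (hfp : ERealProper f) (hfc : ERealConvex f)
    (hgp : ERealProper g) (hgc : ERealConvex g)
    (h : H → ℝ) (h' : H → H) (L : ℝ) (hL : 0 < L)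
    (hconv : ConvexOn ℝ Set.univ h)
    (hgrad : ∀ p : H, HasGradientAt h (h' p) p)
    (hlip : LipschitzWith (Real.toNNReal L) h')
    (A : H →L[ℝ] G) (c : ℝ) (hc : 0 < c)
    (M₁ : ℕ → (H →L[ℝ] H)) (M₂ : ℕ → (G →L[ℝ] G))
    (hM₁ : ∀ k : ℕ, IsSplusOp (M₁ k)) (hM₂ : ∀ k : ℕ, IsSplusOp (M₂ k))
    (x : ℕ → H) (z y : ℕ → G)
    (hx : ∀ k : ℕ, IsXUpdateGrad f h' A c (M₁ k) (x k) (z k) (y k) (x (k+1)))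
    (hz : ∀ k : ℕ, IsZUpdate g c (M₂ k) (A (x (k+1))) (z k) (y k) (z (k+1)))
    (hy : ∀ k : ℕ, y (k+1) = y k + c • (A (x (k+1)) - z (k+1))) :
    ∀ k : ℕ, ∀ (p : H) (q v : G),
      LagrH f h g A (x (k+1)) (z (k+1)) v ≤
        LagrH f h g A p q (y (k+1)) +
          ((c * ⟪z (k+1) - z k, A (p - x (k+1))⟫_ℝ
            + (1/2) * (opSq (M₁ k) (p - x k) + opSq (M₂ k) (q - z k) + c⁻¹ * ‖v - y k‖ ^ 2)
            - (1/2) * (opSq (M₁ k) (p - x (k+1)) + opSq (M₂ k) (q - z (k+1))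
                + c⁻¹ * ‖v - y (k+1)‖ ^ 2)
            - (1/2) * (opSq (M₁ k) (x (k+1) - x k) - L * ‖x (k+1) - x k‖ ^ 2
                + opSq (M₂ k) (z (k+1) - z k) + c⁻¹ * ‖y (k+1) - y k‖ ^ 2) : ℝ) : EReal) := by
  intro k p q v
  refine LagrH_le_LagrH_add ((hx k).le_add hfc hfp.1 (hM₁ k).1 p)
    ((hz k).le_add hgc hgp.1 (hM₂ k).1 q) ?_
  have hsmooth := hconv.add_inner_gradient_le_add_sq hgrad hlip (x k) (x (k+1)) p
  rw [Real.coe_toNNReal L hL.le] at hsmooth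
  have hprox₁ := two_mul_inner_sub_apply_sub (hM₁ k).1 p (x k) (x (k+1))
  have hprox₂ := two_mul_inner_sub_apply_sub (hM₂ k).1 q (z k) (z (k+1))
  have hcoupling := coupling_eq_of_multiplier_update hc.ne' (hy k) (z k) p q v
  linarith

theorem stmt6 {H G : Type*}
    [NormedAddCommGroup H] [InnerProductSpace ℝ H] [CompleteSpace H]
    [NormedAddCommGroup G] [InnerProductSpace ℝ G] [CompleteSpace G]
    (f : H → EReal) (g : G → EReal)
    (hfp : ERealProper f) (hfc : ERealConvex f) (hfl : LowerSemicontinuous f)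
    (hgp : ERealProper g) (hgc : ERealConvex g) (hgl : LowerSemicontinuous g)
    (h : H → ℝ) (h' : H → H) (L : ℝ) (hL : 0 < L)
    (hconv : ConvexOn ℝ Set.univ h)
    (hgrad : ∀ p : H, HasGradientAt h (h' p) p)
    (hlip : LipschitzWith (Real.toNNReal L) h')
    (A : H →L[ℝ] G) (c : ℝ) (hc : 0 < c)
    (M₁ : ℕ → (H →L[ℝ] H)) (M₂ : ℕ → (G →L[ℝ] G))
    (hM₁ : ∀ k : ℕ, IsSplusOp (M₁ k)) (hM₂ : ∀ k : ℕ, IsSplusOp (M₂ k))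
    (x : ℕ → H) (z y : ℕ → G)
    (hx : ∀ k : ℕ, IsXUpdateGrad f h' A c (M₁ k) (x k) (z k) (y k) (x (k+1)))
    (hz : ∀ k : ℕ, IsZUpdate g c (M₂ k) (A (x (k+1))) (z k) (y k) (z (k+1)))
    (hy : ∀ k : ℕ, y (k+1) = y k + c • (A (x (k+1)) - z (k+1))) :
    ∀ k : ℕ, ∀ (p : H) (q v : G),
      LagrH f h g A (x (k+1)) (z (k+1)) v ≤
        LagrH f h g A p q (y (k+1)) +
          ((c * ⟪z (k+1) - z k, A (p - x (k+1))⟫_ℝ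
            + (1/2) * (opSq (M₁ k) (p - x k) + opSq (M₂ k) (q - z k) + c⁻¹ * ‖v - y k‖ ^ 2)
            - (1/2) * (opSq (M₁ k) (p - x (k+1)) + opSq (M₂ k) (q - z (k+1))
                + c⁻¹ * ‖v - y (k+1)‖ ^ 2)
            - (1/2) * (opSq (M₁ k) (x (k+1) - x k) - L * ‖x (k+1) - x k‖ ^ 2
                + opSq (M₂ k) (z (k+1) - z k) + c⁻¹ * ‖y (k+1) - y k‖ ^ 2) : ℝ) : EReal) :=
  stmt6_general f g hfp hfc hgp hgc h h' L hL hconv hgrad hlip A c hc M₁ M₂ hM₁ hM₂ x z y hx hz hy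
end
end

section
/- Assume M₁ᵏ − L·Id ∈ S₊(H), M₁ᵏ ⪰ M₁^{k+1}, M₂ᵏ ∈ S₊(G), and M₂ᵏ ⪰ M₂^{k+1} for all k ≥ 0, and let (xᵏ, zᵏ, yᵏ)_{k≥0} be the sequence generated by the variable-metric ADMM algorithm. Then for all k ≥ 0 and all (x, z, y) ∈ H × G × G: l(x^{k+1}, z^{k+1}, y) ≤ l(x, z, y^{k+1}) + (c/2)(‖Ax − zᵏ‖² − ‖Ax − z^{k+1}‖²) + (1/2)(‖x − xᵏ‖²_{M₁ᵏ} − ‖x − x^{k+1}‖²_{M₁^{k+1}} + ‖z − zᵏ‖²_{M₂ᵏ} − ‖z − z^{k+1}‖²_{M₂^{k+1}}) + (1/(2c))(‖y − yᵏ‖² − ‖y − y^{k+1}‖²). -/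
open scoped InnerProductSpace
open Filter

noncomputable section

/-!
Both subproblems minimize a convex function plus a quadratic one. Comparing the minimizer `m`
with the points `(1 - t) m + t u` and letting `t → 0` gives the three-point inequality
`f m + φ m + (quadratic part of φ)(u - m) ≤ f u + φ u`. For the `x`-update, the linearized smooth
part is restored by the descent lemma for `h` (its `L/2`-term is absorbed by `M₁ᵏ ⪰ L·Id`) and the
gradient inequality of the convex `h`. Adding the two three-point inequalities, using the
multiplier update and `Mᵏ⁺¹ ⪯ Mᵏ`, the remaining terms match the claim up to the nonnegative
`(c/2)‖Ax^{k+1} − zᵏ‖²`, which is discarded.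
-/

section Gradient

open AffineMap Set

variable {E : Type*} [NormedAddCommGroup E] [InnerProductSpace ℝ E] [CompleteSpace E]
  {h : E → ℝ}

theorem HasGradientAt.hasDerivAt_comp_lineMap {a b g : E} {t : ℝ}
    (hg : HasGradientAt h g (lineMap a b t)) :
    HasDerivAt (fun s : ℝ => h (lineMap a b s)) ⟪b - a, g⟫_ℝ t := by
  have := hg.hasFDerivAt.comp_hasDerivAt t hasDerivAt_lineMap
  rwa [InnerProductSpace.toDual_apply_apply, real_inner_comm] at this

theorem ConvexOn.add_inner_le_of_hasGradientAt {s : Set E} (hh : ConvexOn ℝ s h) {a p g : E}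
    (ha : a ∈ s) (hp : p ∈ s) (hg : HasGradientAt h g a) :
    h a + ⟪p - a, g⟫_ℝ ≤ h p := by
  have hline : ConvexOn ℝ (lineMap a p ⁻¹' s) (fun t : ℝ => h (lineMap a p t)) :=
    hh.comp_affineMap (lineMap a p)
  have hderiv := HasGradientAt.hasDerivAt_comp_lineMap (b := p) (t := 0) (by simpa using hg)
  have hslope := hline.le_slope_of_hasDerivAt (by simpa using ha) (by simpa using hp)
    zero_lt_one hderiv
  simp only [slope_def_field, lineMap_apply_zero, lineMap_apply_one, sub_zero, div_one] at hslope
  linarith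

theorem le_add_inner_add_norm_sq_of_lipschitzWith_gradient {h' : E → E} {K : NNReal}
    (hgrad : ∀ u, HasGradientAt h (h' u) u) (hlip : LipschitzWith K h') (a b : E) :
    h b ≤ h a + ⟪b - a, h' a⟫_ℝ + K / 2 * ‖b - a‖ ^ 2 := by
  set ψ : ℝ → ℝ := fun t =>
    h (lineMap a b t) - t * ⟪b - a, h' a⟫_ℝ - K / 2 * t ^ 2 * ‖b - a‖ ^ 2
  have hψ : ∀ t, HasDerivAt ψ
      (⟪b - a, h' (lineMap a b t) - h' a⟫_ℝ - K * t * ‖b - a‖ ^ 2) t := by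
    intro t
    refine ((((hgrad _).hasDerivAt_comp_lineMap (a := a) (b := b)).sub
      ((hasDerivAt_id t).mul_const ⟪b - a, h' a⟫_ℝ)).sub
      (((hasDerivAt_pow 2 t).const_mul (K / 2 : ℝ)).mul_const (‖b - a‖ ^ 2))).congr_deriv ?_
    rw [inner_sub_right]
    ring
  have hanti : AntitoneOn ψ (Icc 0 1) := by
    refine antitoneOn_of_hasDerivWithinAt_nonpos (convex_Icc 0 1)
      (fun t _ => (hψ t).continuousAt.continuousWithinAt)
      (fun t _ => (hψ t).hasDerivWithinAt) fun t ht => ?_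
    rw [interior_Icc] at ht
    have hgap : ‖h' (lineMap a b t) - h' a‖ ≤ K * (t * ‖b - a‖) := by
      have := hlip.dist_le_mul (lineMap a b t) a
      rwa [dist_lineMap_left, Real.norm_of_nonneg ht.1.le, dist_eq_norm, dist_comm,
        dist_eq_norm] at this
    have := real_inner_le_norm (b - a) (h' (lineMap a b t) - h' a)
    nlinarith [norm_nonneg (b - a)]
  have := hanti (left_mem_Icc.2 zero_le_one) (right_mem_Icc.2 zero_le_one) zero_le_one
  simp only [ψ, lineMap_apply_zero, lineMap_apply_one] at this
  linarith

end Gradient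

section ConvexityDefect

variable {E F : Type*} [NormedAddCommGroup E] [InnerProductSpace ℝ E]
  [NormedAddCommGroup F] [InnerProductSpace ℝ F]

/-- The identity satisfied by a quadratic function `φ` whose quadratic part is `S`. -/
def HasConvexityDefect (φ S : E → ℝ) : Prop :=
  ∀ a b : E, ∀ t : ℝ,
    φ ((1 - t) • a + t • b) = (1 - t) * φ a + t * φ b - t * (1 - t) * S (b - a)

namespace HasConvexityDefect

variable {φ ψ S T : E → ℝ}

theorem add (hφ : HasConvexityDefect φ S) (hψ : HasConvexityDefect ψ T) :
    HasConvexityDefect (fun u => φ u + ψ u) (fun d => S d + T d) := by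
  intro a b t
  simp only [hφ a b t, hψ a b t]
  ring

theorem const_mul (hφ : HasConvexityDefect φ S) (r : ℝ) :
    HasConvexityDefect (fun u => r * φ u) (fun d => r * S d) := by
  intro a b t
  simp only [hφ a b t]
  ring

end HasConvexityDefect

theorem hasConvexityDefect_inner_sub (X w : E) :
    HasConvexityDefect (fun u => ⟪u - X, w⟫_ℝ) (fun _ => 0) := by
  intro a b t
  have hcomb : (1 - t) • a + t • b - X = (1 - t) • (a - X) + t • (b - X) := by module
  simp only [hcomb, inner_add_left, real_inner_smul_left]
  ring

theorem hasConvexityDefect_opSq_sub (M : E →L[ℝ] E) (X : E) :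
    HasConvexityDefect (fun u => opSq M (u - X)) (opSq M) := by
  intro a b t
  have hcomb : (1 - t) • a + t • b - X = (1 - t) • (a - X) + t • (b - X) := by module
  have hdiff : b - a = (b - X) - (a - X) := by abel
  simp only [opSq, hcomb, hdiff, map_add, map_sub, map_smul, inner_add_left, inner_add_right,
    inner_sub_left, inner_sub_right, real_inner_smul_left, real_inner_smul_right]
  ring

theorem hasConvexityDefect_norm_sq_sub (A : E →L[ℝ] F) (W : F) :
    HasConvexityDefect (fun u => ‖A u - W‖ ^ 2) (fun d => ‖A d‖ ^ 2) := by
  intro a b t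
  have hcomb : A ((1 - t) • a + t • b) - W = (1 - t) • (A a - W) + t • (A b - W) := by
    rw [map_add, map_smul, map_smul]
    module
  have hdiff : A (b - a) = (A b - W) - (A a - W) := by
    rw [map_sub]
    abel
  simp only [hcomb, hdiff, ← real_inner_self_eq_norm_sq, inner_add_left, inner_add_right,
    inner_sub_left, inner_sub_right, real_inner_smul_left, real_inner_smul_right]
  ring

open Set Filter Topology in
theorem ERealConvex.exists_add_convexityDefect_le {f : E → EReal} (hf : ERealConvex f)
    (hbot : ∀ x, f x ≠ ⊥) {φ S : E → ℝ} (hφ : HasConvexityDefect φ S) {m : E}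
    (hmin : ∀ u, f m + (φ m : EReal) ≤ f u + (φ u : EReal)) {u : E} {s : ℝ} (hs : f u = s) :
    ∃ r : ℝ, f m = r ∧ r + φ m + S (u - m) ≤ s + φ u := by
  have hm_top : f m ≠ ⊤ := by
    intro htop
    have := hmin u
    rw [htop, hs, EReal.top_add_coe] at this
    exact (EReal.coe_lt_top _).not_ge (by exact_mod_cast this)
  set r := (f m).toReal
  have hr : f m = r := (EReal.coe_toReal hm_top (hbot m)).symm
  refine ⟨r, hr, ?_⟩
  have hsegment : ∀ t ∈ Ioc (0 : ℝ) 1, r + φ m + (1 - t) * S (u - m) ≤ s + φ u := by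
    rintro t ⟨ht0, ht1⟩
    set w := (1 - t) • m + t • u
    have hconv : f w ≤ (((1 - t) * r + t * s : ℝ) : EReal) := by
      have := hf m u (1 - t) t (by linarith) ht0.le (by ring)
      rwa [hr, hs, ← EReal.coe_mul, ← EReal.coe_mul, ← EReal.coe_add] at this
    have hcomp : r + φ m ≤ (1 - t) * r + t * s + φ w := by
      have : ((r + φ m : ℝ) : EReal) ≤ (((1 - t) * r + t * s + φ w : ℝ) : EReal) :=
        calc ((r + φ m : ℝ) : EReal) = f m + (φ m : EReal) := by rw [hr]; rfl
          _ ≤ f w + (φ w : EReal) := hmin w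
          _ ≤ (((1 - t) * r + t * s : ℝ) : EReal) + (φ w : EReal) := by gcongr
          _ = _ := rfl
      exact_mod_cast this
    rw [hφ] at hcomp
    have : t * (r + φ m + (1 - t) * S (u - m)) ≤ t * (s + φ u) := by nlinarith
    exact le_of_mul_le_mul_left this ht0
  have hlim : Tendsto (fun t : ℝ => r + φ m + (1 - t) * S (u - m)) (𝓝[>] 0)
      (𝓝 (r + φ m + S (u - m))) := by
    have : Continuous (fun t : ℝ => r + φ m + (1 - t) * S (u - m)) := by fun_prop
    simpa using this.continuousAt.tendsto.mono_left (nhdsWithin_le_nhds (a := 0) (s := Ioi 0))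
  exact le_of_tendsto hlim (eventually_of_mem (Ioc_mem_nhdsGT zero_lt_one) hsegment)

end ConvexityDefect

section ADMMStep

open Set

variable {E F : Type*} [NormedAddCommGroup E] [InnerProductSpace ℝ E]
  [NormedAddCommGroup F] [InnerProductSpace ℝ F]

theorem mul_norm_sq_le_opSq_of_isSplusOp_sub {U : E →L[ℝ] E} {α : ℝ}
    (hU : IsSplusOp (U - α • ContinuousLinearMap.id ℝ E)) (x : E) :
    α * ‖x‖ ^ 2 ≤ opSq U x := by
  have := hU.2 x
  rw [sub_apply, smul_apply, ContinuousLinearMap.id_apply, inner_sub_right,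
    real_inner_smul_right, real_inner_self_eq_norm_sq] at this
  rw [opSq]
  linarith

theorem IsXUpdateGrad.exists_step_le [CompleteSpace E] {f : E → EReal} {h : E → ℝ}
    {h' : E → E} {A : E →L[ℝ] F} {c : ℝ} {M : E →L[ℝ] E} {K : NNReal} {xk xk₁ : E} {zk yk : F}
    (hx : IsXUpdateGrad f h' A c M xk zk yk xk₁) (hf : ERealConvex f) (hbot : ∀ x, f x ≠ ⊥)
    (hh : ConvexOn ℝ univ h) (hgrad : ∀ u, HasGradientAt h (h' u) u)
    (hlip : LipschitzWith K h') (hMK : ∀ d, K * ‖d‖ ^ 2 ≤ opSq M d) {p : E} {s : ℝ}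
    (hs : f p = s) :
    ∃ r : ℝ, f xk₁ = r ∧
      r + h xk₁ + c / 2 * ‖A xk₁ - zk + c⁻¹ • yk‖ ^ 2 + c / 2 * ‖A p - A xk₁‖ ^ 2
          + 1 / 2 * opSq M (p - xk₁)
        ≤ s + h p + c / 2 * ‖A p - zk + c⁻¹ • yk‖ ^ 2 + 1 / 2 * opSq M (p - xk) := by
  have hφ : HasConvexityDefect
      (fun u => ⟪u - xk, h' xk⟫_ℝ + c / 2 * ‖A u - zk + c⁻¹ • yk‖ ^ 2 + 1 / 2 * opSq M (u - xk))
      (fun d => 0 + c / 2 * ‖A d‖ ^ 2 + 1 / 2 * opSq M d) := by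
    intro a b t
    simp only [sub_add]
    exact (((hasConvexityDefect_inner_sub xk (h' xk)).add
      ((hasConvexityDefect_norm_sq_sub A _).const_mul (c / 2))).add
      ((hasConvexityDefect_opSq_sub M xk).const_mul (1 / 2))) a b t
  obtain ⟨r, hr, hmin⟩ := hf.exists_add_convexityDefect_le hbot hφ hx hs
  refine ⟨r, hr, ?_⟩
  have hdescent := le_add_inner_add_norm_sq_of_lipschitzWith_gradient hgrad hlip xk xk₁
  have hsupport := hh.add_inner_le_of_hasGradientAt (mem_univ xk) (mem_univ p) (hgrad xk)
  have hK := hMK (xk₁ - xk)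
  rw [map_sub] at hmin
  linarith

theorem IsZUpdate.exists_step_le {g : F → EReal} {c : ℝ} {M : F →L[ℝ] F} {Ax zk yk zk₁ : F}
    (hz : IsZUpdate g c M Ax zk yk zk₁) (hg : ERealConvex g) (hbot : ∀ x, g x ≠ ⊥)
    (hM : ∀ d, 0 ≤ opSq M d) {q : F} {s : ℝ} (hs : g q = s) :
    ∃ r : ℝ, g zk₁ = r ∧
      r + c / 2 * ‖Ax - zk₁ + c⁻¹ • yk‖ ^ 2 + c / 2 * ‖q - zk₁‖ ^ 2 + 1 / 2 * opSq M (q - zk₁)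
        ≤ s + c / 2 * ‖Ax - q + c⁻¹ • yk‖ ^ 2 + 1 / 2 * opSq M (q - zk) := by
  have hφ : HasConvexityDefect
      (fun w => c / 2 * ‖Ax - w + c⁻¹ • yk‖ ^ 2 + 1 / 2 * opSq M (w - zk))
      (fun d => c / 2 * ‖d‖ ^ 2 + 1 / 2 * opSq M d) := by
    intro a b t
    simp only [sub_add_eq_add_sub, norm_sub_rev (Ax + c⁻¹ • yk)]
    exact (((hasConvexityDefect_norm_sq_sub (ContinuousLinearMap.id ℝ F) _).const_mul (c / 2)).add
      ((hasConvexityDefect_opSq_sub M zk).const_mul (1 / 2))) a b t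
  obtain ⟨r, hr, hmin⟩ := hg.exists_add_convexityDefect_le hbot hφ hz hs
  exact ⟨r, hr, by linarith [hM (zk₁ - zk)]⟩

/-- The two sides differ exactly by `c / 2 * ‖b - z‖ ^ 2`. -/
theorem admm_multiplier_estimate {c : ℝ} (hc : 0 < c) (a b q z z₁ y v : F) :
    ⟪v, b - z₁⟫_ℝ + c / 2 * (‖a - z + c⁻¹ • y‖ ^ 2 - ‖b - z + c⁻¹ • y‖ ^ 2 - ‖a - b‖ ^ 2
        + ‖b - q + c⁻¹ • y‖ ^ 2 - ‖b - z₁ + c⁻¹ • y‖ ^ 2 - ‖q - z₁‖ ^ 2)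
      ≤ ⟪y + c • (b - z₁), a - q⟫_ℝ + c / 2 * (‖a - z‖ ^ 2 - ‖a - z₁‖ ^ 2)
        + 1 / (2 * c) * (‖v - y‖ ^ 2 - ‖v - (y + c • (b - z₁))‖ ^ 2) := by
  have hgap : ⟪y + c • (b - z₁), a - q⟫_ℝ + c / 2 * (‖a - z‖ ^ 2 - ‖a - z₁‖ ^ 2)
        + 1 / (2 * c) * (‖v - y‖ ^ 2 - ‖v - (y + c • (b - z₁))‖ ^ 2)
      - (⟪v, b - z₁⟫_ℝ + c / 2 * (‖a - z + c⁻¹ • y‖ ^ 2 - ‖b - z + c⁻¹ • y‖ ^ 2 - ‖a - b‖ ^ 2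
        + ‖b - q + c⁻¹ • y‖ ^ 2 - ‖b - z₁ + c⁻¹ • y‖ ^ 2 - ‖q - z₁‖ ^ 2))
      = c / 2 * ‖b - z‖ ^ 2 := by
    simp only [← real_inner_self_eq_norm_sq, inner_add_left, inner_add_right, inner_sub_left,
      inner_sub_right, real_inner_smul_left, real_inner_smul_right,
      real_inner_comm b a, real_inner_comm z₁ a, real_inner_comm z a, real_inner_comm y a,
      real_inner_comm q b, real_inner_comm z₁ b, real_inner_comm z b, real_inner_comm y b,
      real_inner_comm v b, real_inner_comm z₁ q, real_inner_comm y q, real_inner_comm y z₁,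
      real_inner_comm v z₁, real_inner_comm y z, real_inner_comm v y]
    field_simp
    ring
  have : 0 ≤ c / 2 * ‖b - z‖ ^ 2 := by positivity
  linarith

theorem exists_real_of_lagrH_ne_top {f : E → EReal} {h : E → ℝ} {g : F → EReal}
    {A : E →L[ℝ] F} {p : E} {q v : F} (hf : ∀ x, f x ≠ ⊥) (hg : ∀ z, g z ≠ ⊥)
    (hl : LagrH f h g A p q v ≠ ⊤) : ∃ a b : ℝ, f p = a ∧ g q = b := by
  have hfp : f p ≠ ⊤ := by
    rintro hp
    apply hl
    simp [LagrH, hp, EReal.top_add_of_ne_bot, hg q]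
  have hgq : g q ≠ ⊤ := by
    rintro hq
    apply hl
    simp [LagrH, hq, EReal.add_top_of_ne_bot, hf p]
  exact ⟨_, _, (EReal.coe_toReal hfp (hf p)).symm, (EReal.coe_toReal hgq (hg q)).symm⟩

end ADMMStep

theorem stmt8_general {H G : Type*}
    [NormedAddCommGroup H] [InnerProductSpace ℝ H] [CompleteSpace H]
    [NormedAddCommGroup G] [InnerProductSpace ℝ G]
    (f : H → EReal) (g : G → EReal)
    (hfp : ERealProper f) (hfc : ERealConvex f)
    (hgp : ERealProper g) (hgc : ERealConvex g)
    (h : H → ℝ) (h' : H → H) (L : ℝ) (hL : 0 < L)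
    (hconv : ConvexOn ℝ Set.univ h)
    (hgrad : ∀ p : H, HasGradientAt h (h' p) p)
    (hlip : LipschitzWith (Real.toNNReal L) h')
    (A : H →L[ℝ] G) (c : ℝ) (hc : 0 < c)
    (M₁ : ℕ → (H →L[ℝ] H)) (M₂ : ℕ → (G →L[ℝ] G))
    (hM₂ : ∀ k : ℕ, IsSplusOp (M₂ k))
    (hM₁L : ∀ k : ℕ, IsSplusOp (M₁ k - L • ContinuousLinearMap.id ℝ H))
    (hM₁mono : ∀ k : ℕ, opLE (M₁ k) (M₁ (k+1)))
    (hM₂mono : ∀ k : ℕ, opLE (M₂ k) (M₂ (k+1)))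
    (x : ℕ → H) (z y : ℕ → G)
    (hx : ∀ k : ℕ, IsXUpdateGrad f h' A c (M₁ k) (x k) (z k) (y k) (x (k+1)))
    (hz : ∀ k : ℕ, IsZUpdate g c (M₂ k) (A (x (k+1))) (z k) (y k) (z (k+1)))
    (hy : ∀ k : ℕ, y (k+1) = y k + c • (A (x (k+1)) - z (k+1))) :
    ∀ k : ℕ, ∀ (p : H) (q v : G),
      LagrH f h g A (x (k+1)) (z (k+1)) v ≤
        LagrH f h g A p q (y (k+1)) +
          (((c/2) * (‖A p - z k‖ ^ 2 - ‖A p - z (k+1)‖ ^ 2)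
            + (1/2) * (opSq (M₁ k) (p - x k) - opSq (M₁ (k+1)) (p - x (k+1))
                + opSq (M₂ k) (q - z k) - opSq (M₂ (k+1)) (q - z (k+1)))
            + (1/(2*c)) * (‖v - y k‖ ^ 2 - ‖v - y (k+1)‖ ^ 2) : ℝ) : EReal) := by
  intro k p q v
  by_cases hR : LagrH f h g A p q (y (k+1)) = ⊤
  · rw [hR, EReal.top_add_coe]
    exact le_top
  obtain ⟨a, b, hfa, hgb⟩ := exists_real_of_lagrH_ne_top hfp.1 hgp.1 hR
  have hML : ∀ d, (Real.toNNReal L : ℝ) * ‖d‖ ^ 2 ≤ opSq (M₁ k) d := by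
    simpa only [Real.coe_toNNReal L hL.le] using mul_norm_sq_le_opSq_of_isSplusOp_sub (hM₁L k)
  obtain ⟨r₁, hr₁, hx_step⟩ := (hx k).exists_step_le hfc hfp.1 hconv hgrad hlip hML hfa
  obtain ⟨r₂, hr₂, hz_step⟩ := (hz k).exists_step_le hgc hgp.1 (hM₂ k).2 hgb
  have hmult := admm_multiplier_estimate hc (A p) (A (x (k+1))) q (z k) (z (k+1)) (y k) v
  have hmono₁ : opSq (M₁ (k+1)) (p - x (k+1)) ≤ opSq (M₁ k) (p - x (k+1)) := hM₁mono k _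
  have hmono₂ : opSq (M₂ (k+1)) (q - z (k+1)) ≤ opSq (M₂ k) (q - z (k+1)) := hM₂mono k _
  rw [LagrH, LagrH, hr₁, hr₂, hfa, hgb, hy k]
  norm_cast
  linarith

theorem stmt8 {H G : Type*}
    [NormedAddCommGroup H] [InnerProductSpace ℝ H] [CompleteSpace H]
    [NormedAddCommGroup G] [InnerProductSpace ℝ G] [CompleteSpace G]
    (f : H → EReal) (g : G → EReal)
    (hfp : ERealProper f) (hfc : ERealConvex f) (hfl : LowerSemicontinuous f)
    (hgp : ERealProper g) (hgc : ERealConvex g) (hgl : LowerSemicontinuous g)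
    (h : H → ℝ) (h' : H → H) (L : ℝ) (hL : 0 < L)
    (hconv : ConvexOn ℝ Set.univ h)
    (hgrad : ∀ p : H, HasGradientAt h (h' p) p)
    (hlip : LipschitzWith (Real.toNNReal L) h')
    (A : H →L[ℝ] G) (c : ℝ) (hc : 0 < c)
    (M₁ : ℕ → (H →L[ℝ] H)) (M₂ : ℕ → (G →L[ℝ] G))
    (hM₁ : ∀ k : ℕ, IsSplusOp (M₁ k)) (hM₂ : ∀ k : ℕ, IsSplusOp (M₂ k))
    (hM₁L : ∀ k : ℕ, IsSplusOp (M₁ k - L • ContinuousLinearMap.id ℝ H))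
    (hM₁mono : ∀ k : ℕ, opLE (M₁ k) (M₁ (k+1)))
    (hM₂mono : ∀ k : ℕ, opLE (M₂ k) (M₂ (k+1)))
    (x : ℕ → H) (z y : ℕ → G)
    (hx : ∀ k : ℕ, IsXUpdateGrad f h' A c (M₁ k) (x k) (z k) (y k) (x (k+1)))
    (hz : ∀ k : ℕ, IsZUpdate g c (M₂ k) (A (x (k+1))) (z k) (y k) (z (k+1)))
    (hy : ∀ k : ℕ, y (k+1) = y k + c • (A (x (k+1)) - z (k+1))) :
    ∀ k : ℕ, ∀ (p : H) (q v : G),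
      LagrH f h g A (x (k+1)) (z (k+1)) v ≤
        LagrH f h g A p q (y (k+1)) +
          (((c/2) * (‖A p - z k‖ ^ 2 - ‖A p - z (k+1)‖ ^ 2)
            + (1/2) * (opSq (M₁ k) (p - x k) - opSq (M₁ (k+1)) (p - x (k+1))
                + opSq (M₂ k) (q - z k) - opSq (M₂ (k+1)) (q - z (k+1)))
            + (1/(2*c)) * (‖v - y k‖ ^ 2 - ‖v - y (k+1)‖ ^ 2) : ℝ) : EReal) :=
  stmt8_general f g hfp hfc hgp hgc h h' L hL hconv hgrad hlip A c hc M₁ M₂ hM₂ hM₁L hM₁mono hM₂mono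
    x z y hx hz hy
end
end
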